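/- arXiv:1706.00742 — 7 statements merged into one kernel-verified Lean document; each statement's English description precedes it below -/
import Mathlib

section
/- Let T ⊆ ℝ^d be measurable with 0 ∈ T and infinite Lebesgue measure, let Z = (Z_t)_{t∈T} be a random field whose marginals all have the same distribution as Z_0 and which satisfies Cov(1{Z_0 > x}, 1{Z_t > y}) ≥ 0 for all t ∈ T and x, y ∈ ℝ, and let A be a random variable with A > 0 almost surely, independent of the field Z. Set X_t = A Z_t and F̄_Z(x) := P(Z_0 > x). If there exists u₀ ∈ ℝ such that the random variable F̄_Z(u₀/A) is not almost surely constant, then ∫_T Cov(1{X_0 > u₀}, 1{X_t > u₀}) dt = +∞; in particular X is long range dependent. -/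
open MeasureTheory ProbabilityTheory Set

noncomputable section

/-- `Cov(1{X > u}, 1{Y > v})` for two real random variables. -/
def covInd {Ω : Type*} [MeasurableSpace Ω] (P : Measure Ω) (X Y : Ω → ℝ) (u v : ℝ) : ℝ :=
  (P {ω | u < X ω ∧ v < Y ω}).toReal - (P {ω | u < X ω}).toReal * (P {ω | v < Y ω}).toReal

/-- if `X_t = A Z_t` with `A > 0` a.s. independent of the positively correlated
field `Z`, and `F̄_Z(u₀/A)` is not a.s. constant for some level `u₀`, then
`∫_T Cov(1{X₀>u₀}, 1{X_t>u₀}) dt = +∞`, i.e. `X` is long range dependent. -/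
theorem random_scale_lrd {d : ℕ} {Ω : Type*} [MeasurableSpace Ω]
    (P : Measure Ω) [IsProbabilityMeasure P]
    (T : Set (Fin d → ℝ)) (hT : MeasurableSet T) (h0T : (0 : Fin d → ℝ) ∈ T)
    (hTvol : volume T = ⊤)
    (Z : (Fin d → ℝ) → Ω → ℝ) (hZmeas : ∀ t, Measurable (Z t))
    (hZid : ∀ t ∈ T, Measure.map (Z t) P = Measure.map (Z 0) P)
    (hZpos : ∀ t ∈ T, ∀ x y : ℝ, 0 ≤ covInd P (Z 0) (Z t) x y)
    (A : Ω → ℝ) (hAmeas : Measurable A) (hApos : ∀ᵐ ω ∂P, 0 < A ω)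
    (hindep : IndepFun A (fun ω => fun t : Fin d → ℝ => Z t ω) P)
    (u₀ : ℝ)
    (hnc : ¬ ∃ c : ℝ, ∀ᵐ ω ∂P, (P {ω' | u₀ / A ω < Z 0 ω'}).toReal = c) :
    (∫⁻ t in T, ENNReal.ofReal
      (covInd P (fun ω => A ω * Z 0 ω) (fun ω => A ω * Z t ω) u₀ u₀)) = ⊤ := by
  classical
  set μ : Measure ℝ := Measure.map A P with hμdef
  have hμprob : IsProbabilityMeasure μ := Measure.isProbabilityMeasure_map hAmeas.aemeasurable
  set ν : Measure ℝ := Measure.map (Z 0) P with hνdef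
  set κ : ℝ → ENNReal := fun a => P {ω' | u₀ / a < Z 0 ω'} with hκdef
  have hκν : ∀ a, κ a = ν (Ioi (u₀ / a)) := by
    intro a
    rw [hνdef, Measure.map_apply (hZmeas 0) measurableSet_Ioi]
    rfl
  have hκmeas : Measurable κ := by
    have h1 : Measurable fun x : ℝ => ν (Ioi x) :=
      Antitone.measurable (fun x y hxy => measure_mono (Ioi_subset_Ioi hxy))
    have h2 : Measurable fun a : ℝ => ν (Ioi (u₀ / a)) :=
      h1.comp (measurable_const.div measurable_id)
    have : κ = fun a => ν (Ioi (u₀ / a)) := funext hκν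
    rw [this]; exact h2
  have hμpos : ∀ᵐ a ∂μ, 0 < a := by
    rw [hμdef]
    exact (ae_map_iff hAmeas.aemeasurable measurableSet_Ioi).2 hApos
  -- Step A : marginal probabilities
  have key1 : ∀ t ∈ T, P {ω | u₀ < A ω * Z t ω} = ∫⁻ a, κ a ∂μ := by
    intro t ht
    have hZt := hZmeas t
    have hind : IndepFun A (Z t) P := hindep.comp measurable_id (measurable_pi_apply t)
    have hmapprod : Measure.map (fun ω => (A ω, Z t ω)) P = μ.prod (Measure.map (Z t) P) :=
      (indepFun_iff_map_prod_eq_prod_map_map hAmeas.aemeasurable hZt.aemeasurable).mp hind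
    have hs : MeasurableSet {p : ℝ × ℝ | u₀ < p.1 * p.2} :=
      measurableSet_lt measurable_const (measurable_fst.mul measurable_snd)
    have h1 : P {ω | u₀ < A ω * Z t ω}
        = (μ.prod (Measure.map (Z t) P)) {p : ℝ × ℝ | u₀ < p.1 * p.2} := by
      rw [← hmapprod, Measure.map_apply (hAmeas.prodMk hZt) hs]
      rfl
    rw [h1, Measure.prod_apply hs]
    refine lintegral_congr_ae (hμpos.mono fun a ha => ?_)
    show Measure.map (Z t) P (Prod.mk a ⁻¹' {p : ℝ × ℝ | u₀ < p.1 * p.2}) = κ a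
    have hset : (Prod.mk a ⁻¹' {p : ℝ × ℝ | u₀ < p.1 * p.2}) = Ioi (u₀ / a) := by
      ext x
      simp only [mem_preimage, mem_setOf_eq, mem_Ioi]
      rw [div_lt_iff₀ ha, mul_comm]
    rw [hset, hZid t ht]
    exact (hκν a).symm
  -- Step B : joint probabilities
  have key2 : ∀ t ∈ T, ∫⁻ a, κ a * κ a ∂μ ≤
      P {ω | u₀ < A ω * Z 0 ω ∧ u₀ < A ω * Z t ω} := by
    intro t ht
    have hpair : Measurable fun ω => (Z 0 ω, Z t ω) := (hZmeas 0).prodMk (hZmeas t)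
    have hind : IndepFun A (fun ω => (Z 0 ω, Z t ω)) P :=
      hindep.comp measurable_id ((measurable_pi_apply 0).prodMk (measurable_pi_apply t))
    have hmapprod : Measure.map (fun ω => (A ω, (Z 0 ω, Z t ω))) P
        = μ.prod (Measure.map (fun ω => (Z 0 ω, Z t ω)) P) :=
      (indepFun_iff_map_prod_eq_prod_map_map hAmeas.aemeasurable hpair.aemeasurable).mp hind
    have hs : MeasurableSet {p : ℝ × ℝ × ℝ | u₀ < p.1 * p.2.1 ∧ u₀ < p.1 * p.2.2} :=
      (measurableSet_lt measurable_const
        (measurable_fst.mul (measurable_fst.comp measurable_snd))).inter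
      (measurableSet_lt measurable_const
        (measurable_fst.mul (measurable_snd.comp measurable_snd)))
    have h1 : P {ω | u₀ < A ω * Z 0 ω ∧ u₀ < A ω * Z t ω}
        = (μ.prod (Measure.map (fun ω => (Z 0 ω, Z t ω)) P))
          {p : ℝ × ℝ × ℝ | u₀ < p.1 * p.2.1 ∧ u₀ < p.1 * p.2.2} := by
      rw [← hmapprod, Measure.map_apply (hAmeas.prodMk hpair) hs]
      rfl
    rw [h1, Measure.prod_apply hs]
    refine lintegral_mono_ae (hμpos.mono fun a ha => ?_)
    show κ a * κ a ≤ (Measure.map (fun ω => (Z 0 ω, Z t ω)) P)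
      (Prod.mk a ⁻¹' {p : ℝ × ℝ × ℝ | u₀ < p.1 * p.2.1 ∧ u₀ < p.1 * p.2.2})
    have hsq : MeasurableSet {q : ℝ × ℝ | u₀ / a < q.1 ∧ u₀ / a < q.2} :=
      (measurableSet_lt measurable_const measurable_fst).inter
      (measurableSet_lt measurable_const measurable_snd)
    have hset : Prod.mk a ⁻¹' {p : ℝ × ℝ × ℝ | u₀ < p.1 * p.2.1 ∧ u₀ < p.1 * p.2.2}
        = {q : ℝ × ℝ | u₀ / a < q.1 ∧ u₀ / a < q.2} := by
      ext q
      simp only [mem_preimage, mem_setOf_eq]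
      rw [div_lt_iff₀ ha, div_lt_iff₀ ha, mul_comm q.1 a, mul_comm q.2 a]
    rw [hset, Measure.map_apply hpair hsq]
    have hJ : (fun ω => (Z 0 ω, Z t ω)) ⁻¹' {q : ℝ × ℝ | u₀ / a < q.1 ∧ u₀ / a < q.2}
        = {ω | u₀ / a < Z 0 ω ∧ u₀ / a < Z t ω} := rfl
    rw [hJ]
    have hZt0 : P {ω' | u₀ / a < Z t ω'} = κ a := by
      rw [hκν, ← hZid t ht, Measure.map_apply (hZmeas t) measurableSet_Ioi]
      rfl
    have hcov := hZpos t ht (u₀ / a) (u₀ / a)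
    unfold covInd at hcov
    rw [hZt0] at hcov
    have hcov' : (κ a).toReal * (κ a).toReal
        ≤ (P {ω | u₀ / a < Z 0 ω ∧ u₀ / a < Z t ω}).toReal := by
      have hk0 : P {ω' | u₀ / a < Z 0 ω'} = κ a := rfl
      rw [hk0] at hcov
      linarith
    rw [← ENNReal.toReal_le_toReal (by finiteness) (measure_ne_top P _), ENNReal.toReal_mul]
    exact hcov'
  -- the real-valued survival function of `u₀ / A`
  set g : ℝ → ℝ := fun a => (κ a).toReal with hgdef
  have hgmeas : Measurable g := hκmeas.ennreal_toReal
  have hgnn : ∀ a, 0 ≤ g a := fun a => ENNReal.toReal_nonneg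
  have hgle : ∀ a, g a ≤ 1 := by
    intro a
    have : κ a ≤ 1 := prob_le_one
    calc g a ≤ (1 : ENNReal).toReal := ENNReal.toReal_mono ENNReal.one_ne_top this
    _ = 1 := by simp
  have hgi : Integrable g μ :=
    (integrable_const (1 : ℝ)).mono' hgmeas.aestronglyMeasurable
      (ae_of_all _ fun a => by rw [Real.norm_eq_abs, abs_of_nonneg (hgnn a)]; exact hgle a)
  have hg2i : Integrable (fun a => g a * g a) μ :=
    (integrable_const (1 : ℝ)).mono' (hgmeas.mul hgmeas).aestronglyMeasurable
      (ae_of_all _ fun a => by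
        rw [Real.norm_eq_abs, abs_of_nonneg (mul_nonneg (hgnn a) (hgnn a))]
        calc g a * g a ≤ 1 * 1 := mul_le_mul (hgle a) (hgle a) (hgnn a) zero_le_one
        _ = 1 := by ring)
  have hl1 : ∫⁻ a, κ a ∂μ = ENNReal.ofReal (∫ a, g a ∂μ) := by
    rw [ofReal_integral_eq_lintegral_ofReal hgi (ae_of_all _ hgnn)]
    exact lintegral_congr fun a => (ENNReal.ofReal_toReal (measure_ne_top _ _)).symm
  have hl2 : ∫⁻ a, κ a * κ a ∂μ = ENNReal.ofReal (∫ a, g a * g a ∂μ) := by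
    rw [ofReal_integral_eq_lintegral_ofReal hg2i
      (ae_of_all _ fun a => mul_nonneg (hgnn a) (hgnn a))]
    refine lintegral_congr fun a => ?_
    show κ a * κ a = ENNReal.ofReal ((κ a).toReal * (κ a).toReal)
    rw [ENNReal.ofReal_mul ENNReal.toReal_nonneg, ENNReal.ofReal_toReal (measure_ne_top _ _)]
  set m : ℝ := ∫ a, g a ∂μ with hmdef
  set ε : ℝ := (∫ a, g a * g a ∂μ) - m * m with hεdef
  -- ε is the variance of g ∘ A, positive since g ∘ A is not a.s. constant
  have h2mi : Integrable (fun a => 2 * m * g a) μ := hgi.const_mul _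
  have hsub : Integrable (fun a => g a * g a - 2 * m * g a) μ := hg2i.sub h2mi
  have hfeq : (fun a => (g a - m) * (g a - m))
      = fun a => g a * g a - 2 * m * g a + m * m := funext fun a => by ring
  have hsqint : Integrable (fun a => (g a - m) * (g a - m)) μ := by
    rw [hfeq]; exact hsub.add (integrable_const _)
  have hvar : ε = ∫ a, (g a - m) * (g a - m) ∂μ := by
    rw [hεdef, hfeq, integral_add hsub (integrable_const _),
      integral_sub hg2i h2mi, integral_const_mul, integral_const]
    simp [hmdef]
    ring
  have hεpos : 0 < ε := by
    rcases lt_or_eq_of_le (hvar ▸ integral_nonneg fun a => mul_self_nonneg (g a - m)) with h | h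
    · exact h
    · exfalso
      apply hnc
      refine ⟨m, ?_⟩
      have hz : ∫ a, (g a - m) * (g a - m) ∂μ = 0 := by rw [← hvar, ← h]
      have hae : ∀ᵐ a ∂μ, (g a - m) * (g a - m) = 0 := by
        have := (integral_eq_zero_iff_of_nonneg
          (fun a => mul_self_nonneg (g a - m)) hsqint).mp hz
        filter_upwards [this] with a ha
        simpa using ha
      have hae' : ∀ᵐ a ∂μ, g a = m := by
        filter_upwards [hae] with a ha
        have := mul_self_eq_zero.mp ha
        linarith
      have := ae_of_ae_map hAmeas.aemeasurable (hμdef ▸ hae')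
      filter_upwards [this] with ω hω
      exact hω
  -- pointwise lower bound on the covariance
  have hεbound : ∀ t ∈ T, ENNReal.ofReal ε ≤ ENNReal.ofReal
      (covInd P (fun ω => A ω * Z 0 ω) (fun ω => A ω * Z t ω) u₀ u₀) := by
    intro t ht
    apply ENNReal.ofReal_le_ofReal
    unfold covInd
    rw [key1 0 h0T, key1 t ht, hl1, ENNReal.toReal_ofReal (integral_nonneg hgnn)]
    have hJ : (∫⁻ a, κ a * κ a ∂μ).toReal
        ≤ (P {ω | u₀ < A ω * Z 0 ω ∧ u₀ < A ω * Z t ω}).toReal :=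
      ENNReal.toReal_mono (measure_ne_top P _) (key2 t ht)
    rw [hl2, ENNReal.toReal_ofReal (integral_nonneg fun a => mul_nonneg (hgnn a) (hgnn a))] at hJ
    rw [hεdef] at *
    linarith
  have hlow : ∫⁻ t in T, ENNReal.ofReal ε ≤ ∫⁻ t in T, ENNReal.ofReal
      (covInd P (fun ω => A ω * Z 0 ω) (fun ω => A ω * Z t ω) u₀ u₀) :=
    lintegral_mono_ae ((ae_restrict_iff' hT).2 (ae_of_all _ hεbound))
  rw [setLIntegral_const, hTvol, ENNReal.mul_top (ENNReal.ofReal_pos.2 hεpos).ne'] at hlow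
  exact top_le_iff.mp hlow

end
end

section
/- Let r ∈ (−1,1) and let (Z₁, Z₂) be bivariate standard Gaussian with correlation r. Then for all u, v ∈ ℝ, Cov(1{Z₁ > u}, 1{Z₂ > v}) = (1/(2π)) ∫_0^r (1 − s²)^{−1/2} exp( −(u² − 2suv + v²)/(2(1 − s²)) ) ds, where for r < 0 the integral is understood as the oriented integral (equal to minus the integral over [r,0]). -/
open MeasureTheory ProbabilityTheory Set

noncomputable section

/-- the bivariate standard Gaussian density with correlation `r` -/
def bivGaussDensity (r x y : ℝ) : ℝ :=
  (2 * Real.pi * Real.sqrt (1 - r ^ 2))⁻¹ *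
    Real.exp (-(x ^ 2 - 2 * r * x * y + y ^ 2) / (2 * (1 - r ^ 2)))

/-- `(U, V)` is a bivariate standard Gaussian pair with correlation `r`. -/
def IsBivStdGaussian {Ω : Type*} [MeasurableSpace Ω] (P : Measure Ω)
    (U V : Ω → ℝ) (r : ℝ) : Prop :=
  Measure.map (fun ω => (U ω, V ω)) P =
    (volume : Measure (ℝ × ℝ)).withDensity fun p => ENNReal.ofReal (bivGaussDensity r p.1 p.2)

/-!
Write `f_s` for the density with correlation `s`. Plackett's identity `∂f_s/∂s = ∂²f_s/∂x∂y`
turns `f_r - f_0` into `∫₀ʳ ∂²f_s/∂x∂y ds`; integrated over the quadrant `(u, ∞) × (v, ∞)`, the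
mixed derivative collapses to the corner value `f_s(u, v)`. Every `f_s` has standard normal
marginals and `f_0` is their product, so the quadrant mass of `f_r - f_0` is the covariance.
One Gaussian envelope dominates `f_s` and its derivatives for all `s² ≤ r²`, which justifies
the fundamental theorem of calculus and the exchanges of integrals.
-/

open Filter Topology

/-- `∂f_s/∂x` for the density `f_s`. -/
def bivGaussDerivX (s x y : ℝ) : ℝ := bivGaussDensity s x y * ((s * y - x) / (1 - s ^ 2))

/-- `∂²f_s/∂x∂y` for the density `f_s`. -/
def bivGaussDerivXY (s x y : ℝ) : ℝ :=
  bivGaussDensity s x y *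
    ((s * (1 - s ^ 2) + x * y * (1 + s ^ 2) - s * (x ^ 2 + y ^ 2)) / (1 - s ^ 2) ^ 2)

lemma bivGaussDensity_pos {s : ℝ} (hs : s ^ 2 < 1) (x y : ℝ) : 0 < bivGaussDensity s x y := by
  have : 0 < Real.sqrt (1 - s ^ 2) := Real.sqrt_pos.mpr (by linarith)
  unfold bivGaussDensity
  positivity

lemma bivGaussDensity_comm (s x y : ℝ) : bivGaussDensity s x y = bivGaussDensity s y x := by
  unfold bivGaussDensity; ring_nf

lemma bivGaussDensity_zero (x y : ℝ) :
    bivGaussDensity 0 x y = gaussianPDFReal 0 1 x * gaussianPDFReal 0 1 y := by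
  have h : Real.sqrt (2 * Real.pi) * Real.sqrt (2 * Real.pi) = 2 * Real.pi :=
    Real.mul_self_sqrt (by positivity)
  simp only [bivGaussDensity, gaussianPDFReal_def, NNReal.coe_one, mul_one, sub_zero]
  rw [mul_mul_mul_comm, ← Real.exp_add, ← mul_inv, h]
  congr 2 <;> ring_nf

/-- Completing the square in `y`. -/
lemma bivGaussDensity_eq_mul_gaussianPDFReal {s : ℝ} (hs : s ^ 2 < 1) (x y : ℝ) :
    bivGaussDensity s x y =
      gaussianPDFReal 0 1 x * gaussianPDFReal (s * x) (1 - s ^ 2).toNNReal y := by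
  have h1 : (0 : ℝ) < 1 - s ^ 2 := by linarith
  have hsqrt : Real.sqrt (2 * Real.pi) * Real.sqrt (2 * Real.pi * (1 - s ^ 2)) =
      2 * Real.pi * Real.sqrt (1 - s ^ 2) := by
    rw [← Real.sqrt_mul (by positivity), show 2 * Real.pi * (2 * Real.pi * (1 - s ^ 2)) =
      (2 * Real.pi) ^ 2 * (1 - s ^ 2) by ring, Real.sqrt_mul (by positivity),
      Real.sqrt_sq (by positivity)]
  simp only [bivGaussDensity, gaussianPDFReal_def, NNReal.coe_one, mul_one,
    Real.coe_toNNReal _ h1.le]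
  rw [mul_mul_mul_comm, ← mul_inv, hsqrt, ← Real.exp_add]
  congr 2
  field_simp
  ring

lemma integral_bivGaussDensity_right {s : ℝ} (hs : s ^ 2 < 1) (x : ℝ) :
    ∫ y, bivGaussDensity s x y = gaussianPDFReal 0 1 x := by
  simp_rw [bivGaussDensity_eq_mul_gaussianPDFReal hs x, integral_const_mul]
  rw [integral_gaussianPDFReal_eq_one _ (Real.toNNReal_pos.mpr (by linarith)).ne', mul_one]

/-- A common integrable majorant of the density and its derivatives, for correlations
`s² ≤ r² < 1`. -/
def gaussEnvelope (r x y : ℝ) : ℝ :=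
  16 / (2 * Real.pi * Real.sqrt (1 - r ^ 2) * (1 - r ^ 2) ^ 2) *
    (Real.exp (-x ^ 2 / 8) * Real.exp (-y ^ 2 / 8))

lemma bivGaussDensity_le_exp {r s : ℝ} (hr : r ^ 2 < 1) (hsr : s ^ 2 ≤ r ^ 2) (x y : ℝ) :
    bivGaussDensity s x y ≤
      (2 * Real.pi * Real.sqrt (1 - r ^ 2))⁻¹ * Real.exp (-(x ^ 2 + y ^ 2) / 4) := by
  have hs : 0 < 1 - s ^ 2 := by linarith
  have hpre : (2 * Real.pi * Real.sqrt (1 - s ^ 2))⁻¹ ≤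
      (2 * Real.pi * Real.sqrt (1 - r ^ 2))⁻¹ := by
    gcongr
  have hexp : -(x ^ 2 - 2 * s * x * y + y ^ 2) / (2 * (1 - s ^ 2)) ≤ -(x ^ 2 + y ^ 2) / 4 := by
    rw [neg_div, neg_div, neg_le_neg_iff, div_le_div_iff₀ (by norm_num) (by positivity)]
    nlinarith [sq_nonneg (x - s * y), sq_nonneg (s * x - y), sq_nonneg (x - y), sq_nonneg (x + y)]
  exact mul_le_mul hpre (Real.exp_le_exp.mpr hexp) (by positivity) (by positivity)

lemma bivGaussDensity_mul_le {r s : ℝ} (hr : r ^ 2 < 1) (hsr : s ^ 2 ≤ r ^ 2) (x y : ℝ) :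
    bivGaussDensity s x y * (1 + 2 * (x ^ 2 + y ^ 2)) ≤
      16 * (2 * Real.pi * Real.sqrt (1 - r ^ 2))⁻¹ *
        (Real.exp (-x ^ 2 / 8) * Real.exp (-y ^ 2 / 8)) := by
  have hpoly : 1 + 2 * (x ^ 2 + y ^ 2) ≤ 16 * Real.exp ((x ^ 2 + y ^ 2) / 8) := by
    nlinarith [Real.add_one_le_exp ((x ^ 2 + y ^ 2) / 8), Real.exp_pos ((x ^ 2 + y ^ 2) / 8)]
  have hexp : Real.exp (-(x ^ 2 + y ^ 2) / 4) * Real.exp ((x ^ 2 + y ^ 2) / 8) =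
      Real.exp (-x ^ 2 / 8) * Real.exp (-y ^ 2 / 8) := by
    rw [← Real.exp_add, ← Real.exp_add]; ring_nf
  calc bivGaussDensity s x y * (1 + 2 * (x ^ 2 + y ^ 2))
      ≤ (2 * Real.pi * Real.sqrt (1 - r ^ 2))⁻¹ * Real.exp (-(x ^ 2 + y ^ 2) / 4) *
          (16 * Real.exp ((x ^ 2 + y ^ 2) / 8)) :=
        mul_le_mul (bivGaussDensity_le_exp hr hsr x y) hpoly (by positivity) (by positivity)
    _ = _ := by rw [← hexp]; ring

lemma abs_bivGaussDensity_mul_div_le {r s x y a d : ℝ} (hr : r ^ 2 < 1) (hsr : s ^ 2 ≤ r ^ 2)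
    (ha : |a| ≤ 1 + 2 * (x ^ 2 + y ^ 2)) (hd : (1 - r ^ 2) ^ 2 ≤ d) :
    |bivGaussDensity s x y * (a / d)| ≤ gaussEnvelope r x y := by
  have hd' : 0 < d := lt_of_lt_of_le (by positivity) hd
  have hf := bivGaussDensity_pos (lt_of_le_of_lt hsr hr) x y
  rw [abs_mul, abs_of_pos hf, abs_div, abs_of_pos hd']
  calc bivGaussDensity s x y * (|a| / d)
      ≤ bivGaussDensity s x y * (1 + 2 * (x ^ 2 + y ^ 2)) / (1 - r ^ 2) ^ 2 := by
        rw [mul_div_assoc]; gcongr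
    _ ≤ 16 * (2 * Real.pi * Real.sqrt (1 - r ^ 2))⁻¹ *
          (Real.exp (-x ^ 2 / 8) * Real.exp (-y ^ 2 / 8)) / (1 - r ^ 2) ^ 2 := by
        gcongr ?_ / _; exact bivGaussDensity_mul_le hr hsr x y
    _ = gaussEnvelope r x y := by unfold gaussEnvelope; field_simp

lemma abs_bivGaussDensity_le {r s : ℝ} (hr : r ^ 2 < 1) (hsr : s ^ 2 ≤ r ^ 2) (x y : ℝ) :
    |bivGaussDensity s x y| ≤ gaussEnvelope r x y := by
  have hd : (1 - r ^ 2) ^ 2 ≤ 1 := by nlinarith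
  simpa using abs_bivGaussDensity_mul_div_le (a := 1) hr hsr (by simp; positivity) hd

lemma abs_bivGaussDerivX_le {r s : ℝ} (hr : r ^ 2 < 1) (hsr : s ^ 2 ≤ r ^ 2) (x y : ℝ) :
    |bivGaussDerivX s x y| ≤ gaussEnvelope r x y := by
  refine abs_bivGaussDensity_mul_div_le hr hsr (abs_le.mpr ⟨?_, ?_⟩) (by nlinarith) <;>
    nlinarith [sq_nonneg (x - 1), sq_nonneg (x + 1), sq_nonneg (y - 1), sq_nonneg (y + 1),
      sq_nonneg (s * y - y), sq_nonneg (s * y + y)]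

lemma abs_bivGaussDerivXY_le {r s : ℝ} (hr : r ^ 2 < 1) (hsr : s ^ 2 ≤ r ^ 2) (x y : ℝ) :
    |bivGaussDerivXY s x y| ≤ gaussEnvelope r x y := by
  refine abs_bivGaussDensity_mul_div_le hr hsr (abs_le.mpr ⟨?_, ?_⟩)
    (pow_le_pow_left₀ (by linarith) (by linarith) 2) <;>
    nlinarith [sq_nonneg (x - y), sq_nonneg (x + y), sq_nonneg s, sq_nonneg (1 - s),
      sq_nonneg (1 + s), mul_nonneg (sq_nonneg s) (sq_nonneg (x - y)),
      mul_nonneg (sq_nonneg s) (sq_nonneg (x + y))]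

section Measurability

variable {α : Type*} [MeasurableSpace α] {s x y : α → ℝ}

@[fun_prop]
lemma Measurable.bivGaussDensity (hs : Measurable s) (hx : Measurable x)
    (hy : Measurable y) : Measurable fun a => bivGaussDensity (s a) (x a) (y a) := by
  unfold _root_.bivGaussDensity; fun_prop

@[fun_prop]
lemma Measurable.bivGaussDerivX (hs : Measurable s) (hx : Measurable x)
    (hy : Measurable y) : Measurable fun a => bivGaussDerivX (s a) (x a) (y a) := by
  unfold _root_.bivGaussDerivX; fun_prop

@[fun_prop]
lemma Measurable.bivGaussDerivXY (hs : Measurable s) (hx : Measurable x)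
    (hy : Measurable y) : Measurable fun a => bivGaussDerivXY (s a) (x a) (y a) := by
  unfold _root_.bivGaussDerivXY; fun_prop

end Measurability

lemma integrable_exp_neg_sq_div_eight : Integrable fun t : ℝ => Real.exp (-t ^ 2 / 8) := by
  simpa [neg_div, div_eq_inv_mul] using integrable_exp_neg_mul_sq (b := 1 / 8) (by norm_num)

lemma tendsto_exp_neg_sq_div_eight :
    Tendsto (fun t : ℝ => Real.exp (-t ^ 2 / 8)) atTop (𝓝 0) :=
  Real.tendsto_exp_atBot.comp <| (tendsto_neg_atTop_atBot.comp
    (tendsto_pow_atTop two_ne_zero)).atBot_div_const (by norm_num)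

lemma integrable_gaussEnvelope (r : ℝ) :
    Integrable fun p : ℝ × ℝ => gaussEnvelope r p.1 p.2 :=
  (integrable_exp_neg_sq_div_eight.mul_prod integrable_exp_neg_sq_div_eight).const_mul _

lemma integrable_gaussEnvelope_left (r y : ℝ) : Integrable fun x => gaussEnvelope r x y :=
  (integrable_exp_neg_sq_div_eight.mul_const _).const_mul _

lemma integrable_gaussEnvelope_right (r x : ℝ) : Integrable fun y => gaussEnvelope r x y :=
  (integrable_exp_neg_sq_div_eight.const_mul _).const_mul _

lemma tendsto_gaussEnvelope_left (r y : ℝ) :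
    Tendsto (fun x => gaussEnvelope r x y) atTop (𝓝 0) := by
  simpa [gaussEnvelope] using (tendsto_exp_neg_sq_div_eight.mul_const _).const_mul _

lemma tendsto_gaussEnvelope_right (r x : ℝ) :
    Tendsto (fun y => gaussEnvelope r x y) atTop (𝓝 0) := by
  simpa [gaussEnvelope] using (tendsto_exp_neg_sq_div_eight.const_mul _).const_mul _

lemma hasDerivAt_bivGaussDensity_x {s : ℝ} (hs : s ^ 2 < 1) (x y : ℝ) :
    HasDerivAt (fun x => bivGaussDensity s x y) (bivGaussDerivX s x y) x := by
  have hq : HasDerivAt (fun x : ℝ => -(x ^ 2 - 2 * s * x * y + y ^ 2) / (2 * (1 - s ^ 2)))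
      (-(2 * x - 2 * s * y) / (2 * (1 - s ^ 2))) x := by
    refine (((hasDerivAt_pow 2 x).sub
      (((hasDerivAt_id x).const_mul (2 * s)).mul_const y)).add_const (y ^ 2)).neg.div_const _
      |>.congr_deriv ?_
    simp
  refine (hq.exp.const_mul _).congr_deriv ?_
  have : 1 - s ^ 2 ≠ 0 := by linarith
  unfold bivGaussDerivX bivGaussDensity
  field_simp
  ring

lemma hasDerivAt_bivGaussDerivX_y {s : ℝ} (hs : s ^ 2 < 1) (x y : ℝ) :
    HasDerivAt (fun y => bivGaussDerivX s x y) (bivGaussDerivXY s x y) y := by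
  have hq : HasDerivAt (fun y : ℝ => -(x ^ 2 - 2 * s * x * y + y ^ 2) / (2 * (1 - s ^ 2)))
      (-(2 * y - 2 * s * x) / (2 * (1 - s ^ 2))) y := by
    refine (((hasDerivAt_id y).const_mul (2 * s * x)).const_sub (x ^ 2)).add
      (hasDerivAt_pow 2 y) |>.neg.div_const _ |>.congr_deriv ?_
    simp; ring
  have hl : HasDerivAt (fun y : ℝ => (s * y - x) / (1 - s ^ 2)) (s / (1 - s ^ 2)) y := by
    simpa using (((hasDerivAt_id y).const_mul s).sub_const x).div_const (1 - s ^ 2)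
  refine ((hq.exp.const_mul _).mul hl).congr_deriv ?_
  have : 1 - s ^ 2 ≠ 0 := by linarith
  unfold bivGaussDerivXY bivGaussDensity
  field_simp
  ring

lemma hasDerivAt_bivGaussDensity_corr {s : ℝ} (hs : s ^ 2 < 1) (x y : ℝ) :
    HasDerivAt (fun s => bivGaussDensity s x y) (bivGaussDerivXY s x y) s := by
  have h1 : 0 < 1 - s ^ 2 := by linarith
  have ha : HasDerivAt (fun s : ℝ => 1 - s ^ 2) (-(2 * s)) s := by
    simpa using (hasDerivAt_pow 2 s).const_sub 1
  have hc : HasDerivAt (fun s : ℝ => 2 * Real.pi * Real.sqrt (1 - s ^ 2))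
      (2 * Real.pi * (-(2 * s) / (2 * Real.sqrt (1 - s ^ 2)))) s :=
    (ha.sqrt h1.ne').const_mul _
  have hq : HasDerivAt (fun s : ℝ => -(x ^ 2 - 2 * s * x * y + y ^ 2) / (2 * (1 - s ^ 2)))
      ((2 * x * y * (2 * (1 - s ^ 2)) - -(x ^ 2 - 2 * s * x * y + y ^ 2) * (2 * -(2 * s))) /
        (2 * (1 - s ^ 2)) ^ 2) s := by
    refine ((((((hasDerivAt_id s).const_mul 2).mul_const x).mul_const y).const_sub
      (x ^ 2)).add_const (y ^ 2)).neg.div (ha.const_mul 2) (by positivity) |>.congr_deriv ?_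
    simp
  refine ((hc.inv (by positivity)).mul hq.exp).congr_deriv ?_
  unfold bivGaussDerivXY bivGaussDensity
  simp only [Pi.inv_apply]
  field_simp
  rw [Real.sq_sqrt h1.le]
  ring

lemma integrable_bivGaussDensity {s : ℝ} (hs : s ^ 2 < 1) :
    Integrable fun p : ℝ × ℝ => bivGaussDensity s p.1 p.2 :=
  (integrable_gaussEnvelope s).mono' (by fun_prop)
    (ae_of_all _ fun p => abs_bivGaussDensity_le hs le_rfl p.1 p.2)

lemma integral_Ioi_bivGaussDerivXY {s : ℝ} (hs : s ^ 2 < 1) (x v : ℝ) :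
    ∫ y in Ioi v, bivGaussDerivXY s x y = -bivGaussDerivX s x v := by
  have hint : IntegrableOn (fun y => bivGaussDerivXY s x y) (Ioi v) :=
    ((integrable_gaussEnvelope_right s x).mono' (by fun_prop)
      (ae_of_all _ fun y => abs_bivGaussDerivXY_le hs le_rfl x y)).integrableOn
  have hlim : Tendsto (fun y => bivGaussDerivX s x y) atTop (𝓝 0) :=
    squeeze_zero_norm (fun y => abs_bivGaussDerivX_le hs le_rfl x y)
      (tendsto_gaussEnvelope_right s x)
  simpa using integral_Ioi_of_hasDerivAt_of_tendsto'
    (fun y _ => hasDerivAt_bivGaussDerivX_y hs x y) hint hlim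

lemma integral_Ioi_bivGaussDerivX {s : ℝ} (hs : s ^ 2 < 1) (u y : ℝ) :
    ∫ x in Ioi u, bivGaussDerivX s x y = -bivGaussDensity s u y := by
  have hint : IntegrableOn (fun x => bivGaussDerivX s x y) (Ioi u) :=
    ((integrable_gaussEnvelope_left s y).mono' (by fun_prop)
      (ae_of_all _ fun x => abs_bivGaussDerivX_le hs le_rfl x y)).integrableOn
  have hlim : Tendsto (fun x => bivGaussDensity s x y) atTop (𝓝 0) :=
    squeeze_zero_norm (fun x => abs_bivGaussDensity_le hs le_rfl x y)
      (tendsto_gaussEnvelope_left s y)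
  simpa using integral_Ioi_of_hasDerivAt_of_tendsto'
    (fun x _ => hasDerivAt_bivGaussDensity_x hs x y) hint hlim

lemma setIntegral_Ioi_prod_Ioi_bivGaussDerivXY {s : ℝ} (hs : s ^ 2 < 1) (u v : ℝ) :
    ∫ p in Ioi u ×ˢ Ioi v, bivGaussDerivXY s p.1 p.2 = bivGaussDensity s u v := by
  have hint : Integrable fun p : ℝ × ℝ => bivGaussDerivXY s p.1 p.2 :=
    (integrable_gaussEnvelope s).mono' (by fun_prop)
      (ae_of_all _ fun p => abs_bivGaussDerivXY_le hs le_rfl p.1 p.2)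
  rw [Measure.volume_eq_prod, setIntegral_prod _ hint.integrableOn]
  simp_rw [integral_Ioi_bivGaussDerivXY hs, integral_neg, integral_Ioi_bivGaussDerivX hs, neg_neg]

lemma sq_le_sq_of_mem_uIcc_zero {r s : ℝ} (hs : s ∈ uIcc 0 r) : s ^ 2 ≤ r ^ 2 :=
  sq_le_sq.mpr (by simpa using abs_sub_left_of_mem_uIcc hs)

lemma bivGaussDensity_sub_bivGaussDensity_zero {r : ℝ} (hr : r ^ 2 < 1) (x y : ℝ) :
    bivGaussDensity r x y - bivGaussDensity 0 x y =
      ∫ s in (0 : ℝ)..r, bivGaussDerivXY s x y := by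
  refine (intervalIntegral.integral_eq_sub_of_hasDerivAt (fun s hs =>
    hasDerivAt_bivGaussDensity_corr ((sq_le_sq_of_mem_uIcc_zero hs).trans_lt hr) x y) ?_).symm
  refine (intervalIntegrable_const (c := gaussEnvelope r x y)).mono_fun' (by fun_prop) ?_
  filter_upwards [ae_restrict_mem measurableSet_uIoc] with s hs
  exact abs_bivGaussDerivXY_le hr (sq_le_sq_of_mem_uIcc_zero (uIoc_subset_uIcc hs)) x y

lemma setIntegral_Ioi_prod_Ioi_bivGaussDensity_sub_zero {r : ℝ} (hr : r ^ 2 < 1) (u v : ℝ) :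
    (∫ p in Ioi u ×ˢ Ioi v, bivGaussDensity r p.1 p.2) -
        ∫ p in Ioi u ×ˢ Ioi v, bivGaussDensity 0 p.1 p.2 =
      ∫ s in (0 : ℝ)..r, bivGaussDensity s u v := by
  have hswap : Integrable (Function.uncurry fun s (p : ℝ × ℝ) => bivGaussDerivXY s p.1 p.2)
      ((volume.restrict (uIoc 0 r)).prod (volume.restrict (Ioi u ×ˢ Ioi v))) := by
    refine ((integrableOn_const (C := (1 : ℝ)) (by simp)).mul_prod
      (integrable_gaussEnvelope r).restrict).mono' (by fun_prop) ?_
    rw [Measure.prod_restrict]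
    filter_upwards [ae_restrict_mem (measurableSet_uIoc.prod
      (measurableSet_Ioi.prod measurableSet_Ioi))] with q hq
    simpa [Function.uncurry] using
      abs_bivGaussDerivXY_le hr (sq_le_sq_of_mem_uIcc_zero (uIoc_subset_uIcc hq.1))
        q.2.1 q.2.2
  rw [← integral_sub (integrable_bivGaussDensity hr).integrableOn
    (integrable_bivGaussDensity (by norm_num)).integrableOn]
  simp_rw [bivGaussDensity_sub_bivGaussDensity_zero hr]
  rw [← intervalIntegral_integral_swap hswap]
  exact intervalIntegral.integral_congr fun s hs =>
    setIntegral_Ioi_prod_Ioi_bivGaussDerivXY ((sq_le_sq_of_mem_uIcc_zero hs).trans_lt hr) u v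

lemma setIntegral_prod_univ_bivGaussDensity {s : ℝ} (hs : s ^ 2 < 1) (A : Set ℝ) :
    ∫ p in A ×ˢ univ, bivGaussDensity s p.1 p.2 = ∫ x in A, gaussianPDFReal 0 1 x := by
  rw [Measure.volume_eq_prod, setIntegral_prod _ (integrable_bivGaussDensity hs).integrableOn,
    Measure.restrict_univ]
  simp_rw [integral_bivGaussDensity_right hs]

lemma setIntegral_univ_prod_bivGaussDensity {s : ℝ} (hs : s ^ 2 < 1) (B : Set ℝ) :
    ∫ p in univ ×ˢ B, bivGaussDensity s p.1 p.2 = ∫ y in B, gaussianPDFReal 0 1 y := by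
  conv_lhs => enter [2, p]; rw [bivGaussDensity_comm]
  exact (setIntegral_prod_swap B univ _).trans (setIntegral_prod_univ_bivGaussDensity hs B)

lemma setIntegral_prod_bivGaussDensity_zero (A B : Set ℝ) :
    ∫ p in A ×ˢ B, bivGaussDensity 0 p.1 p.2 =
      (∫ x in A, gaussianPDFReal 0 1 x) * ∫ y in B, gaussianPDFReal 0 1 y := by
  simp_rw [bivGaussDensity_zero]
  exact setIntegral_prod_mul _ _ _ _

section IsBivStdGaussian

variable {Ω : Type*} [MeasurableSpace Ω] {P : Measure Ω} {U V : Ω → ℝ} {r : ℝ}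

lemma IsBivStdGaussian.aemeasurable (hr : r ^ 2 < 1) (h : IsBivStdGaussian P U V r) :
    AEMeasurable (fun ω => (U ω, V ω)) P := by
  by_contra hmeas
  rw [IsBivStdGaussian, Measure.map_of_not_aemeasurable hmeas, eq_comm,
    withDensity_eq_zero_iff (by fun_prop)] at h
  obtain ⟨p, hp⟩ := h.exists
  exact (ENNReal.ofReal_pos.mpr (bivGaussDensity_pos hr p.1 p.2)).ne' hp

lemma IsBivStdGaussian.toReal_measure_preimage (hr : r ^ 2 < 1) (h : IsBivStdGaussian P U V r)
    {A : Set (ℝ × ℝ)} (hA : MeasurableSet A) :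
    (P ((fun ω => (U ω, V ω)) ⁻¹' A)).toReal = ∫ p in A, bivGaussDensity r p.1 p.2 := by
  have hf (p : ℝ × ℝ) : 0 ≤ bivGaussDensity r p.1 p.2 := (bivGaussDensity_pos hr _ _).le
  rw [← Measure.map_apply_of_aemeasurable (h.aemeasurable hr) hA, h, withDensity_apply _ hA,
    ← ofReal_integral_eq_lintegral_ofReal (integrable_bivGaussDensity hr).integrableOn
      (ae_of_all _ hf), ENNReal.toReal_ofReal (integral_nonneg hf)]

end IsBivStdGaussian

theorem covInd_gaussian_formula_general {Ω : Type*} [MeasurableSpace Ω]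
    (P : Measure Ω)
    (r : ℝ) (hr : r ∈ Set.Ioo (-1 : ℝ) 1)
    (Z₁ Z₂ : Ω → ℝ) (hZ : IsBivStdGaussian P Z₁ Z₂ r) (u v : ℝ) :
    covInd P Z₁ Z₂ u v =
      (2 * Real.pi)⁻¹ * ∫ s in (0 : ℝ)..r,
        (Real.sqrt (1 - s ^ 2))⁻¹ *
          Real.exp (-(u ^ 2 - 2 * s * u * v + v ^ 2) / (2 * (1 - s ^ 2))) := by
  have hr2 : r ^ 2 < 1 := (sq_lt_one_iff_abs_lt_one r).mpr (abs_lt.mpr hr)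
  have hprob {A : Set (ℝ × ℝ)} (hA : MeasurableSet A) := hZ.toReal_measure_preimage hr2 hA
  set Z := fun ω => (Z₁ ω, Z₂ ω)
  have hboth : {ω | u < Z₁ ω ∧ v < Z₂ ω} = Z ⁻¹' (Ioi u ×ˢ Ioi v) := rfl
  have hfst : {ω | u < Z₁ ω} = Z ⁻¹' (Ioi u ×ˢ univ) := by ext; simp [Z]
  have hsnd : {ω | v < Z₂ ω} = Z ⁻¹' (univ ×ˢ Ioi v) := by ext; simp [Z]
  rw [covInd, hboth, hfst, hsnd, hprob (measurableSet_Ioi.prod measurableSet_Ioi),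
    hprob (measurableSet_Ioi.prod .univ), hprob (MeasurableSet.univ.prod measurableSet_Ioi),
    setIntegral_prod_univ_bivGaussDensity hr2, setIntegral_univ_prod_bivGaussDensity hr2,
    ← setIntegral_prod_bivGaussDensity_zero,
    setIntegral_Ioi_prod_Ioi_bivGaussDensity_sub_zero hr2, ← intervalIntegral.integral_const_mul]
  congr 1 with s
  rw [bivGaussDensity, mul_inv, mul_assoc]

/-- For a bivariate standard Gaussian pair `(Z₁, Z₂)` with correlation `r`,
`Cov(1{Z₁>u}, 1{Z₂>v}) = (2π)⁻¹ ∫_0^r (1-s²)^{-1/2} exp(-(u²-2suv+v²)/(2(1-s²))) ds`,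
the integral being oriented. -/
theorem covInd_gaussian_formula {Ω : Type*} [MeasurableSpace Ω]
    (P : Measure Ω) [IsProbabilityMeasure P]
    (r : ℝ) (hr : r ∈ Set.Ioo (-1 : ℝ) 1)
    (Z₁ Z₂ : Ω → ℝ) (hZ : IsBivStdGaussian P Z₁ Z₂ r) (u v : ℝ) :
    covInd P Z₁ Z₂ u v =
      (2 * Real.pi)⁻¹ * ∫ s in (0 : ℝ)..r,
        (Real.sqrt (1 - s ^ 2))⁻¹ *
          Real.exp (-(u ^ 2 - 2 * s * u * v + v ^ 2) / (2 * (1 - s ^ 2))) :=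
  covInd_gaussian_formula_general P r hr Z₁ Z₂ hZ u v

end
end

section
/- Let Y be a standard normal random variable and let G : ℝ → ℝ be a monotone (nondecreasing or nonincreasing), right-continuous function, and let u ∈ ℝ be such that 0 < P(G(Y) > u) < 1. Then E[Y · 1{G(Y) > u}] ≠ 0. In particular, the Hermite rank of the function y ↦ 1{G(y) > u} − P(G(Y) > u) equals 1. -/
/-!
Only two properties of the standard Gaussian law `γ` matter: it has mean zero and
`id` is integrable. If `G` is monotone, `A = {y | u < G y}` is an upper set. Either
`A ⊆ (0, ∞)`, so that `∫_A y dγ > 0` because `γ A > 0`; or `A` contains some `a ≤ 0`,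
so that `Aᶜ ⊆ (-∞, 0)` and `∫_A y dγ = -∫_{Aᶜ} y dγ > 0` because `γ Aᶜ > 0`.
For antitone `G`, pass to the complement.
-/

open MeasureTheory ProbabilityTheory Set

lemma setIntegral_pos_of_forall_pos {X : Type*} [MeasurableSpace X] {μ : Measure X}
    {s : Set X} {f : X → ℝ} (hs : MeasurableSet s) (hμs : μ s ≠ 0)
    (hf : ∀ x ∈ s, 0 < f x) (hfi : IntegrableOn f s μ) :
    0 < ∫ x in s, f x ∂μ := by
  have hnonneg : 0 ≤ᵐ[μ.restrict s] f :=
    (ae_restrict_iff' hs).2 (Filter.Eventually.of_forall fun x hx => (hf x hx).le)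
  have hsupp : Function.support f ∩ s = s := inter_eq_right.2 fun x hx => (hf x hx).ne'
  rw [setIntegral_pos_iff_support_of_nonneg_ae hnonneg hfi, hsupp]
  exact pos_iff_ne_zero.2 hμs

section MeanZero

variable {μ : Measure ℝ} {s : Set ℝ}

lemma setIntegral_id_pos_of_isUpperSet (hint : Integrable (fun x => x) μ)
    (hmean : ∫ x, x ∂μ = 0) (hs : IsUpperSet s) (hμs : μ s ≠ 0) (hμsc : μ sᶜ ≠ 0) :
    0 < ∫ x in s, x ∂μ := by
  have hms : MeasurableSet s := hs.ordConnected.measurableSet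
  by_cases hpos : ∀ x ∈ s, 0 < x
  · exact setIntegral_pos_of_forall_pos hms hμs hpos hint.integrableOn
  · obtain ⟨a, ha, ha0⟩ := not_forall₂.1 hpos
    have hneg : ∀ x ∈ sᶜ, 0 < -x := fun x hx =>
      neg_pos.2 ((not_le.1 fun hax => hx (hs hax ha)).trans_le (not_lt.1 ha0))
    have hcompl := setIntegral_pos_of_forall_pos hms.compl hμsc hneg hint.neg.integrableOn
    rw [integral_neg] at hcompl
    linarith [integral_add_compl hms hint]

lemma setIntegral_id_neg_of_isLowerSet (hint : Integrable (fun x => x) μ)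
    (hmean : ∫ x, x ∂μ = 0) (hs : IsLowerSet s) (hμs : μ s ≠ 0) (hμsc : μ sᶜ ≠ 0) :
    ∫ x in s, x ∂μ < 0 := by
  have hcompl := setIntegral_id_pos_of_isUpperSet hint hmean hs.compl hμsc
    (by rwa [compl_compl])
  linarith [integral_add_compl hs.ordConnected.measurableSet hint]

end MeanZero

lemma integral_indicator_comp_eq_setIntegral_map {Ω : Type*} [MeasurableSpace Ω]
    {P : Measure Ω} {Y : Ω → ℝ} (hY : AEMeasurable Y P) {s : Set ℝ} (hs : MeasurableSet s) :
    ∫ ω, s.indicator (fun y => y) (Y ω) ∂P = ∫ y in s, y ∂(P.map Y) := by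
  rw [← integral_indicator hs,
    integral_map hY (measurable_id'.indicator hs).aestronglyMeasurable]

theorem hermite_rank_one_indicator_general {Ω : Type*} [MeasurableSpace Ω]
    (P : Measure Ω)
    (Y : Ω → ℝ)
    (hY : Measure.map Y P = gaussianReal 0 1)
    (G : ℝ → ℝ) (hGmono : Monotone G ∨ Antitone G)
    (u : ℝ) (hu : 0 < P {ω | u < G (Y ω)}) (hu' : P {ω | u < G (Y ω)} < 1) :
    (∫ ω, (if u < G (Y ω) then Y ω else 0) ∂P) ≠ 0 := by
  set A : Set ℝ := {y | u < G y}
  have hYae : AEMeasurable Y P := .of_map_ne_zero (hY ▸ IsProbabilityMeasure.ne_zero _)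
  have hA : IsUpperSet A ∨ IsLowerSet A := hGmono.imp
    (isUpperSet_Ioi u).preimage (fun hG _ _ hxy hx => hx.trans_le (hG hxy))
  have hAmeas : MeasurableSet A := hA.elim (·.ordConnected.measurableSet)
    (·.ordConnected.measurableSet)
  have hPA : P {ω | u < G (Y ω)} = gaussianReal 0 1 A := by
    rw [← hY, Measure.map_apply_of_aemeasurable hYae hAmeas]
    rfl
  have hγA : gaussianReal 0 1 A ≠ 0 := (hPA ▸ hu).ne'
  have hγAc : gaussianReal 0 1 Aᶜ ≠ 0 := by
    rw [Ne, prob_compl_eq_zero_iff hAmeas]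
    exact (hPA ▸ hu').ne
  have hint : Integrable (fun x => x) (gaussianReal 0 1) :=
    memLp_one_iff_integrable.1 (memLp_id_gaussianReal 1)
  have hmean : ∫ x, x ∂gaussianReal 0 1 = 0 := integral_id_gaussianReal
  have hind : (fun ω => if u < G (Y ω) then Y ω else 0) =
      fun ω => A.indicator (fun y => y) (Y ω) := by
    funext ω
    simp only [indicator_apply, A, mem_ofPred_eq]
  rw [hind, integral_indicator_comp_eq_setIntegral_map hYae hAmeas, hY]
  rcases hA with hup | hlow
  · exact (setIntegral_id_pos_of_isUpperSet hint hmean hup hγA hγAc).ne'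
  · exact (setIntegral_id_neg_of_isLowerSet hint hmean hlow hγA hγAc).ne

/-- for a monotone right-continuous `G` and a level `u` with
`0 < P(G(Y) > u) < 1`, one has `E[Y·1{G(Y) > u}] ≠ 0`; i.e. the function
`y ↦ 1{G(y) > u} − P(G(Y) > u)` has Hermite rank 1. -/
theorem hermite_rank_one_indicator {Ω : Type*} [MeasurableSpace Ω]
    (P : Measure Ω) [IsProbabilityMeasure P]
    (Y : Ω → ℝ) (hYmeas : Measurable Y)
    (hY : Measure.map Y P = gaussianReal 0 1)
    (G : ℝ → ℝ) (hGmono : Monotone G ∨ Antitone G)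
    (hGrc : ∀ x, ContinuousWithinAt G (Set.Ici x) x)
    (u : ℝ) (hu : 0 < P {ω | u < G (Y ω)}) (hu' : P {ω | u < G (Y ω)} < 1) :
    (∫ ω, (if u < G (Y ω) then Y ω else 0) ∂P) ≠ 0 :=
  hermite_rank_one_indicator_general P Y hY G hGmono u hu hu'
end

section
/- Let Y be a standard normal random variable, let Z be a real random variable independent of Y, let G : ℝ → [0,∞) be nondecreasing and right-continuous, and let u > 0. Define h(y) := P(G(y)Z > u) for y ∈ ℝ, and assume h is not constant on ℝ. Then E[Y · 1{G(Y)Z > u}] = E[Y h(Y)] ≠ 0 (in fact > 0). In particular, the Hermite rank of the function y ↦ P(G(y)Z > u) − P(G(Y)Z > u) equals 1. -/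
open MeasureTheory ProbabilityTheory Set Real
open scoped ENNReal NNReal

noncomputable section

lemma pdf01_neg (x : ℝ) : gaussianPDFReal 0 1 (-x) = gaussianPDFReal 0 1 x := by
  simp [gaussianPDFReal, neg_sq]

lemma pdf01_eq (x : ℝ) : gaussianPDFReal 0 1 x = (Real.sqrt (2 * π))⁻¹ * Real.exp (-(1/2) * x ^ 2) := by
  simp only [gaussianPDFReal, NNReal.coe_one, mul_one, sub_zero]
  congr 1
  ring

lemma integrable_mul_pdf01 : Integrable (fun x : ℝ => x * gaussianPDFReal 0 1 x) := by
  have h := integrable_mul_exp_neg_mul_sq (b := (1:ℝ)/2) (by norm_num)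
  have heq : (fun x : ℝ => x * gaussianPDFReal 0 1 x)
      = fun x => (Real.sqrt (2 * π))⁻¹ * (x * Real.exp (-(1/2 : ℝ) * x ^ 2)) := by
    ext x
    rw [pdf01_eq]
    ring
  rw [heq]
  exact h.const_mul _

lemma gaussian01_withDensity :
    gaussianReal 0 1 = volume.withDensity (fun x => ((gaussianPDFReal 0 1 x).toNNReal : ℝ≥0∞)) := by
  rw [gaussianReal_of_var_ne_zero 0 one_ne_zero]
  rfl

lemma integrable_id_gaussian01 : Integrable (fun x : ℝ => x) (gaussianReal 0 1) := by
  rw [gaussianReal_of_var_ne_zero 0 one_ne_zero,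
    integrable_withDensity_iff (measurable_gaussianPDF 0 1)
      (ae_of_all _ fun x => ENNReal.ofReal_lt_top)]
  have : (fun x : ℝ => x * (gaussianPDF 0 1 x).toReal) = fun x => x * gaussianPDFReal 0 1 x := by
    ext x
    rw [gaussianPDF, ENNReal.toReal_ofReal (gaussianPDFReal_nonneg 0 1 x)]
  rw [this]
  exact integrable_mul_pdf01

lemma integral_id_gaussian01 : ∫ x, x ∂(gaussianReal 0 1) = 0 := by
  rw [gaussian01_withDensity,
    integral_withDensity_eq_integral_smul ((measurable_gaussianPDFReal 0 1).real_toNNReal)]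
  have heq : (fun x : ℝ => (gaussianPDFReal 0 1 x).toNNReal • x)
      = fun x => x * gaussianPDFReal 0 1 x := by
    ext x
    rw [NNReal.smul_def, smul_eq_mul, Real.coe_toNNReal _ (gaussianPDFReal_nonneg 0 1 x)]
    ring
  rw [heq]
  have hodd := integral_neg_eq_self (fun x : ℝ => x * gaussianPDFReal 0 1 x) volume
  simp only [pdf01_neg, neg_mul] at hodd
  rw [integral_neg] at hodd
  linarith

lemma gaussian01_Ioo_pos {a b : ℝ} (hab : a < b) :
    0 < ((gaussianReal 0 1) (Ioo a b)).toReal := by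
  refine ENNReal.toReal_pos ?_ (measure_ne_top _ _)
  intro h0
  have := gaussianReal_absolutelyContinuous' 0 (one_ne_zero (α := NNReal)) h0
  rw [Real.volume_Ioo] at this
  exact (ENNReal.ofReal_pos.mpr (by linarith)).ne' this

/-- for nondecreasing right-continuous `G ≥ 0`, `Z` independent of the
standard normal `Y`, `u > 0` and `h(y) = P(G(y)Z > u)` non-constant, one has
`E[Y·1{G(Y)Z > u}] = E[Y h(Y)] > 0`; i.e. the function `y ↦ P(G(y)Z > u) − P(G(Y)Z > u)`
has Hermite rank 1. -/
theorem hermite_rank_one_volatility {Ω : Type*} [MeasurableSpace Ω]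
    (P : Measure Ω) [IsProbabilityMeasure P]
    (Y : Ω → ℝ) (hYmeas : Measurable Y)
    (hY : Measure.map Y P = gaussianReal 0 1)
    (Z : Ω → ℝ) (hZmeas : Measurable Z)
    (hindep : IndepFun Y Z P)
    (G : ℝ → ℝ) (hGmono : Monotone G) (hGnonneg : ∀ x, 0 ≤ G x)
    (hGrc : ∀ x, ContinuousWithinAt G (Set.Ici x) x)
    (u : ℝ) (hu : 0 < u)
    (hnc : ∃ y₁ y₂ : ℝ, (P {ω | u < G y₁ * Z ω}).toReal ≠ (P {ω | u < G y₂ * Z ω}).toReal) :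
    (∫ ω, (if u < G (Y ω) * Z ω then Y ω else 0) ∂P) =
      (∫ ω, Y ω * (P {ω' | u < G (Y ω) * Z ω'}).toReal ∂P) ∧
    0 < (∫ ω, Y ω * (P {ω' | u < G (Y ω) * Z ω'}).toReal ∂P) := by
  have hGmeas : Measurable G := hGmono.measurable
  set μ : Measure ℝ := gaussianReal 0 1 with hμdef
  set ν : Measure ℝ := Measure.map Z P with hνdef
  haveI : IsProbabilityMeasure ν := Measure.isProbabilityMeasure_map hZmeas.aemeasurable
  set h : ℝ → ℝ := fun y => (P {ω | u < G y * Z ω}).toReal with hhdef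
  have hSmeas : ∀ y : ℝ, MeasurableSet {z : ℝ | u < G y * z} := fun y =>
    measurableSet_lt measurable_const (measurable_const.mul measurable_id)
  have hmapS : ∀ y : ℝ, ν {z | u < G y * z} = P {ω | u < G y * Z ω} := by
    intro y
    rw [hνdef, Measure.map_apply hZmeas (hSmeas y)]
    rfl
  -- monotonicity of h
  have hsub : ∀ ⦃y₁ y₂ : ℝ⦄, y₁ ≤ y₂ → {z : ℝ | u < G y₁ * z} ⊆ {z | u < G y₂ * z} := by
    intro y₁ y₂ hy z hz
    simp only [mem_setOf_eq] at hz ⊢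
    have hzpos : 0 < z := by
      by_contra hzle
      push_neg at hzle
      have : G y₁ * z ≤ 0 := mul_nonpos_of_nonneg_of_nonpos (hGnonneg y₁) hzle
      linarith
    calc u < G y₁ * z := hz
      _ ≤ G y₂ * z := mul_le_mul_of_nonneg_right (hGmono hy) hzpos.le
  have hmono : Monotone h := by
    intro y₁ y₂ hy
    refine ENNReal.toReal_mono (measure_ne_top _ _) ?_
    rw [← hmapS, ← hmapS]
    exact measure_mono (hsub hy)
  have hh01 : ∀ y, 0 ≤ h y ∧ h y ≤ 1 := by
    intro y
    refine ⟨ENNReal.toReal_nonneg, ?_⟩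
    have := prob_le_one (μ := P) (s := {ω | u < G y * Z ω})
    simpa using ENNReal.toReal_mono ENNReal.one_ne_top this
  have hhmeas : Measurable h := hmono.measurable
  -- the product function
  have hFmeas : Measurable (fun p : ℝ × ℝ => if u < G p.1 * p.2 then p.1 else 0) := by
    refine Measurable.ite ?_ measurable_fst measurable_const
    exact measurableSet_lt measurable_const ((hGmeas.comp measurable_fst).mul measurable_snd)
  have hjoint : Measure.map (fun ω => (Y ω, Z ω)) P = μ.prod ν := by
    have := (indepFun_iff_map_prod_eq_prod_map_map hYmeas.aemeasurable
      hZmeas.aemeasurable).mp hindep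
    rw [this, hY]
  have hfst_int : Integrable (fun p : ℝ × ℝ => p.1) (μ.prod ν) := by
    have hmeq : (μ.prod ν).map Prod.fst = μ := by
      rw [Measure.map_fst_prod]
      simp
    have h1 : Integrable (fun x : ℝ => x) ((μ.prod ν).map Prod.fst) := by
      rw [hmeq]
      exact integrable_id_gaussian01
    exact (integrable_map_measure measurable_id.aestronglyMeasurable
      measurable_fst.aemeasurable).mp h1
  have hFint : Integrable (fun p : ℝ × ℝ => if u < G p.1 * p.2 then p.1 else 0) (μ.prod ν) := by
    refine hfst_int.mono hFmeas.aestronglyMeasurable (ae_of_all _ fun p => ?_)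
    by_cases hp : u < G p.1 * p.2 <;> simp [hp, norm_nonneg]
  -- the key change of variables
  have key : (∫ ω, (if u < G (Y ω) * Z ω then Y ω else 0) ∂P) = ∫ y, y * h y ∂μ := by
    have e1 : (∫ ω, (if u < G (Y ω) * Z ω then Y ω else 0) ∂P)
        = ∫ p, (if u < G p.1 * p.2 then p.1 else 0)
            ∂(Measure.map (fun ω => (Y ω, Z ω)) P) := by
      rw [integral_map (hYmeas.prodMk hZmeas).aemeasurable hFmeas.aestronglyMeasurable]
    rw [e1, hjoint, integral_prod _ hFint]
    refine integral_congr_ae (ae_of_all _ fun y => ?_)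
    have e2 : (fun z : ℝ => if u < G y * z then y else 0)
        = Set.indicator {z : ℝ | u < G y * z} (fun _ => y) := by
      ext z
      by_cases hz : u < G y * z <;> simp [Set.indicator, hz]
    calc ∫ z, (if u < G y * z then y else 0) ∂ν
        = ∫ z, Set.indicator {z : ℝ | u < G y * z} (fun _ => y) z ∂ν := by rw [e2]
      _ = (ν {z : ℝ | u < G y * z}).toReal • y := integral_indicator_const y (hSmeas y)
      _ = y * h y := by rw [hmapS y, smul_eq_mul, mul_comm]
  have eRHS : (∫ ω, Y ω * (P {ω' | u < G (Y ω) * Z ω'}).toReal ∂P) = ∫ y, y * h y ∂μ := by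
    have := integral_map (φ := Y) (μ := P) hYmeas.aemeasurable
      (f := fun y => y * h y) ((measurable_id.mul hhmeas).aestronglyMeasurable)
    rw [hY] at this
    exact this.symm
  -- integrability of y * h y
  have hint_yh : Integrable (fun y => y * h y) μ := by
    refine integrable_id_gaussian01.mono
      ((measurable_id.mul hhmeas).aestronglyMeasurable) (ae_of_all _ fun y => ?_)
    rw [norm_mul]
    have h1 : ‖h y‖ ≤ 1 := by
      rw [Real.norm_eq_abs, abs_le]
      constructor <;> linarith [(hh01 y).1, (hh01 y).2]
    calc ‖y‖ * ‖h y‖ ≤ ‖y‖ * 1 := mul_le_mul_of_nonneg_left h1 (norm_nonneg y)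
      _ = ‖(fun x : ℝ => x) y‖ := by simp
  -- positivity
  have hfnonneg : ∀ y : ℝ, 0 ≤ y * (h y - h 0) := by
    intro y
    rcases le_or_gt 0 y with hy | hy
    · exact mul_nonneg hy (sub_nonneg.mpr (hmono hy))
    · have h1 : h y ≤ h 0 := hmono hy.le
      nlinarith
  have hmain : ∀ c d ε : ℝ, c < d → 0 < ε → (∀ y ∈ Ioo c d, ε ≤ y * (h y - h 0)) →
      0 < ∫ y, y * h y ∂μ := by
    intro c d ε hcd hε hbound
    have hint_f : Integrable (fun y => y * (h y - h 0)) μ := by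
      have e : (fun y : ℝ => y * (h y - h 0)) = fun y => y * h y - h 0 * y := by
        ext y; ring
      rw [e]
      exact hint_yh.sub (integrable_id_gaussian01.const_mul _)
    have hsplit : ∫ y, y * (h y - h 0) ∂μ = ∫ y, y * h y ∂μ - h 0 * ∫ y, y ∂μ := by
      have e : (fun y : ℝ => y * (h y - h 0)) = fun y => y * h y - h 0 * y := by
        ext y; ring
      rw [e, integral_sub hint_yh (integrable_id_gaussian01.const_mul _),
        integral_const_mul]
    have hind : 0 < ∫ y, (Ioo c d).indicator (fun _ => ε) y ∂μ := by
      rw [integral_indicator_const ε measurableSet_Ioo, smul_eq_mul]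
      exact mul_pos (gaussian01_Ioo_pos hcd) hε
    have hle : (∫ y, (Ioo c d).indicator (fun _ => ε) y ∂μ) ≤ ∫ y, y * (h y - h 0) ∂μ := by
      refine integral_mono ((integrable_const ε).indicator measurableSet_Ioo) hint_f ?_
      intro y
      by_cases hy : y ∈ Ioo c d
      · rw [Set.indicator_of_mem hy]
        exact hbound y hy
      · rw [Set.indicator_of_notMem hy]
        exact hfnonneg y
    have := hsplit
    rw [integral_id_gaussian01] at this
    have h0' : 0 < ∫ y, y * (h y - h 0) ∂μ := lt_of_lt_of_le hind hle
    linarith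
  have hab : ∃ a b : ℝ, a < b ∧ h a < h b := by
    obtain ⟨y₁, y₂, hne⟩ := hnc
    rcases lt_trichotomy y₁ y₂ with hlt | heq | hgt
    · exact ⟨y₁, y₂, hlt, lt_of_le_of_ne (hmono hlt.le) hne⟩
    · exact absurd (by rw [heq]) hne
    · exact ⟨y₂, y₁, hgt, lt_of_le_of_ne (hmono hgt.le) (Ne.symm hne)⟩
  obtain ⟨a, b, hab, hhab⟩ := hab
  have hpos : 0 < ∫ y, y * h y ∂μ := by
    rcases lt_or_ge (h 0) (h b) with hb0 | hb0
    · -- point b to the right of 0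
      have hbpos : 0 < b := by
        by_contra hb
        push_neg at hb
        exact absurd (hmono hb) (not_le.mpr hb0)
      refine hmain b (b + 1) (b * (h b - h 0)) (by linarith)
        (mul_pos hbpos (sub_pos.mpr hb0)) ?_
      intro y hy
      obtain ⟨hy1, hy2⟩ := hy
      have hm : h b ≤ h y := hmono hy1.le
      exact mul_le_mul hy1.le (by linarith) (by linarith) (by linarith)
    · -- then h a < h 0 and a < 0
      have ha0 : h a < h 0 := lt_of_lt_of_le hhab hb0
      have haneg : a < 0 := by
        by_contra ha
        push_neg at ha
        exact absurd (hmono ha) (not_le.mpr ha0)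
      refine hmain (a - 1) a (-a * (h 0 - h a)) (by linarith)
        (mul_pos (by linarith) (sub_pos.mpr ha0)) ?_
      intro y hy
      obtain ⟨hy1, hy2⟩ := hy
      have hm : h y ≤ h a := hmono hy2.le
      have e : y * (h y - h 0) = -y * (h 0 - h y) := by ring
      rw [e]
      exact mul_le_mul (by linarith) (by linarith) (by linarith) (by linarith)
  exact ⟨key.trans eRHS.symm, eRHS ▸ hpos⟩

end
end

section
/- Let Y be a standard normal random variable and let G : [0,∞) → ℝ be a monotone (nondecreasing or nonincreasing), right-continuous, non-constant function such that E|G(|Y|)|^{1+θ} < ∞ for some θ ∈ (0,1]. Then E[Y G(|Y|)] = 0 and E[(Y² − 1) G(|Y|)] ≠ 0; moreover E[(Y² − 1) G(|Y|)] > 0 if G is nondecreasing and < 0 if G is nonincreasing. In particular, the Hermite rank of y ↦ G(|y|) equals 2. -/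
/-!
Since `y ↦ y G(|y|)` is odd and the standard Gaussian is symmetric, `E[Y G(|Y|)] = 0`.
For the second coefficient, `E[Y² - 1] = 0` allows replacing `G(|y|)` by `G(|y|) - G(1)`;
by monotonicity of `G` the factors `y² - 1` and `G(|y|) - G(1)` then have the same sign, and
right-continuity (together with non-constancy) makes their product strictly positive on an
interval, which has positive Gaussian measure. Integrability comes from Hölder's inequality,
pairing `G(|Y|) ∈ L^{1+θ}` with the finiteness of all Gaussian moments.
-/

open MeasureTheory ProbabilityTheory Set Filter
open scoped ENNReal NNReal

section Odd

variable {α E : Type*} [AddGroup α] [MeasurableSpace α] [MeasurableNeg α]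
  [NormedAddCommGroup E] [NormedSpace ℝ E]

theorem integral_eq_zero_of_odd (μ : Measure α) [μ.IsNegInvariant] {f : α → E}
    (hf : Function.Odd f) : ∫ x, f x ∂μ = 0 := by
  have h := integral_neg_eq_self f μ
  rw [funext hf, integral_neg] at h
  have h₂ : (2 : ℝ) • ∫ x, f x ∂μ = 0 := by
    rw [two_smul]
    nth_rw 1 [← h]
    exact neg_add_cancel _
  exact (smul_eq_zero.mp h₂).resolve_left two_ne_zero

end Odd

instance isNegInvariant_gaussianReal (v : ℝ≥0) : (gaussianReal 0 v).IsNegInvariant :=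
  ⟨by simpa [Measure.neg] using gaussianReal_map_neg (μ := 0) (v := v)⟩

theorem memLp_pow_gaussianReal (μ : ℝ) (v : ℝ≥0) (n : ℕ) {p : ℝ≥0∞}
    (hp : p ≠ ∞) : MemLp (fun x ↦ x ^ n) p (gaussianReal μ v) := by
  rcases eq_or_ne n 0 with rfl | hn
  · simpa using memLp_const (1 : ℝ)
  have h := (memLp_id_gaussianReal' (μ := μ) (v := v) (p * n)
    (ENNReal.mul_ne_top hp (ENNReal.natCast_ne_top n))).norm_rpow_div n
  rw [ENNReal.mul_div_cancel_right (by exact_mod_cast hn) (ENNReal.natCast_ne_top n)] at h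
  refine h.congr_norm (by fun_prop) (ae_of_all _ fun x ↦ ?_)
  simp

theorem integral_sq_sub_one_gaussianReal : ∫ x, (x ^ 2 - 1) ∂gaussianReal 0 1 = 0 := by
  have hvar := variance_fun_id_gaussianReal (μ := 0) (v := 1)
  rw [variance_of_integral_eq_zero aemeasurable_id' integral_id_gaussianReal] at hvar
  rw [integral_sub ((memLp_pow_gaussianReal 0 1 2 ENNReal.one_ne_top).integrable le_rfl)
    (integrable_const 1), hvar]
  simp

theorem MeasureTheory.MemLp.integrable_mul_of_forall_memLp {α : Type*} {m : MeasurableSpace α}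
    {μ : Measure α} {f g : α → ℝ} {q : ℝ≥0∞} (hg : MemLp g q μ) (hq : 1 < q)
    (hf : ∀ p ≠ ∞, MemLp f p μ) : Integrable (fun x ↦ f x * g x) μ := by
  have := ENNReal.HolderConjugate.conjExponent hq.le
  have hp : q.conjExponent ≠ ∞ :=
    ((ENNReal.HolderConjugate.lt_top_iff_one_lt q.conjExponent q).mpr hq).ne
  exact (hf _ hp).integrable_mul hg

namespace ProbabilityTheory.HasLaw

variable {Ω 𝓧 : Type*} [MeasurableSpace Ω] [MeasurableSpace 𝓧] {P : Measure Ω}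
  {μ : Measure 𝓧} {X : Ω → 𝓧}

theorem integrable_comp_iff {E : Type*} [NormedAddCommGroup E] (hX : HasLaw X μ P)
    {f : 𝓧 → E} (hf : AEStronglyMeasurable f μ) :
    Integrable (f ∘ X) P ↔ Integrable f μ := by
  rw [← hX.map_eq] at hf ⊢
  exact (integrable_map_measure hf hX.aemeasurable).symm

theorem memLp_ofReal_iff_integrable_abs_rpow (hX : HasLaw X μ P) {f : 𝓧 → ℝ}
    (hf : AEStronglyMeasurable f μ) {q : ℝ} (hq : 0 < q) :
    MemLp f (ENNReal.ofReal q) μ ↔ Integrable (fun ω ↦ |f (X ω)| ^ q) P := by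
  have hfq := (hf.norm.aemeasurable.pow_const q).aestronglyMeasurable
  rw [← integrable_norm_rpow_iff hf (by simpa using hq) ENNReal.ofReal_ne_top,
    ENNReal.toReal_ofReal hq.le, ← hX.integrable_comp_iff hfq]
  rfl

end ProbabilityTheory.HasLaw

section MonotoneOn

variable {f : ℝ → ℝ}

theorem MonotoneOn.measurable_comp_abs (hf : MonotoneOn f (Ici 0)) :
    Measurable fun y ↦ f |y| := by
  have hmono : Monotone fun x ↦ f (max x 0) := fun a b hab ↦
    hf (le_max_right a 0) (le_max_right b 0) (max_le_max hab le_rfl)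
  simpa [Function.comp_def] using hmono.measurable.comp measurable_abs

theorem AntitoneOn.measurable_comp_abs (hf : AntitoneOn f (Ici 0)) :
    Measurable fun y ↦ f |y| := by
  simpa [Pi.neg_def] using hf.neg.measurable_comp_abs.neg

theorem MonotoneOn.sq_sub_one_mul_sub_nonneg (hf : MonotoneOn f (Ici 0)) (y : ℝ) :
    0 ≤ (y ^ 2 - 1) * (f |y| - f 1) := by
  rcases le_total |y| 1 with hy | hy
  · have hfy : f |y| ≤ f 1 := hf (abs_nonneg y) (mem_Ici.2 zero_le_one) hy
    exact mul_nonneg_of_nonpos_of_nonpos (by nlinarith [sq_abs y, abs_nonneg y]) (by linarith)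
  · have hfy : f 1 ≤ f |y| := hf (mem_Ici.2 zero_le_one) (abs_nonneg y) hy
    exact mul_nonneg (by nlinarith [sq_abs y]) (by linarith)

theorem MonotoneOn.exists_Ioo_sq_sub_one_mul_sub_pos (hf : MonotoneOn f (Ici 0))
    (hrc : ∀ x ≥ (0 : ℝ), ContinuousWithinAt f (Ici x) x)
    (hnc : ∃ x ∈ Ici (0 : ℝ), ∃ y ∈ Ici (0 : ℝ), f x ≠ f y) :
    ∃ a b, a < b ∧ ∀ t ∈ Ioo a b, 0 < (t ^ 2 - 1) * (f |t| - f 1) := by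
  obtain ⟨x₀, hx₀, hne⟩ : ∃ x₀ ∈ Ici (0 : ℝ), f x₀ ≠ f 1 := by
    obtain ⟨x, hx, y, hy, hxy⟩ := hnc
    by_cases h : f x = f 1
    · exact ⟨y, hy, fun h' ↦ hxy (h.trans h'.symm)⟩
    · exact ⟨x, hx, h⟩
  rcases hne.lt_or_gt with hlt | hgt
  · have hx₁ : x₀ < 1 := lt_of_not_ge fun h ↦ (hf (mem_Ici.2 zero_le_one) hx₀ h).not_gt hlt
    -- right-continuity at `x₀` is what keeps `f < f 1` on an interval of positive length
    obtain ⟨u, hu, hsub⟩ :=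
      mem_nhdsGE_iff_exists_Ico_subset.mp ((hrc x₀ hx₀).eventually_lt_const hlt)
    refine ⟨x₀, min u 1, lt_min hu hx₁, fun t ⟨ht₀, ht⟩ ↦ ?_⟩
    have hft : f t < f 1 := hsub ⟨ht₀.le, ht.trans_le (min_le_left _ _)⟩
    have ht₁ : t < 1 := ht.trans_le (min_le_right _ _)
    rw [abs_of_nonneg (hx₀.trans ht₀.le)]
    exact mul_pos_of_neg_of_neg (by nlinarith [hx₀.trans ht₀.le]) (by linarith)
  · have hx₁ : 1 < x₀ := lt_of_not_ge fun h ↦ (hf hx₀ (mem_Ici.2 zero_le_one) h).not_gt hgt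
    refine ⟨x₀, x₀ + 1, by linarith, fun t ⟨ht₀, _⟩ ↦ ?_⟩
    have hft : f x₀ ≤ f t := hf hx₀ (hx₀.trans ht₀.le) ht₀.le
    rw [abs_of_nonneg (hx₀.trans ht₀.le)]
    exact mul_pos (by nlinarith) (by linarith)

theorem MonotoneOn.integral_sq_sub_one_mul_pos {μ : Measure ℝ} (hμ : volume ≪ μ)
    (hf : MonotoneOn f (Ici 0)) (hrc : ∀ x ≥ (0 : ℝ), ContinuousWithinAt f (Ici x) x)
    (hnc : ∃ x ∈ Ici (0 : ℝ), ∃ y ∈ Ici (0 : ℝ), f x ≠ f y)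
    (hint₁ : Integrable (fun y ↦ y ^ 2 - 1) μ) (h₀ : ∫ y, (y ^ 2 - 1) ∂μ = 0)
    (hint : Integrable (fun y ↦ (y ^ 2 - 1) * f |y|) μ) :
    0 < ∫ y, (y ^ 2 - 1) * f |y| ∂μ := by
  have hint' : Integrable (fun y ↦ (y ^ 2 - 1) * (f |y| - f 1)) μ := by
    simp only [mul_sub]
    exact hint.sub (hint₁.mul_const (f 1))
  -- subtracting `f 1` costs nothing as `∫ (y² - 1) dμ = 0`, and makes the integrand nonnegative
  have hshift : ∫ y, (y ^ 2 - 1) * f |y| ∂μ = ∫ y, (y ^ 2 - 1) * (f |y| - f 1) ∂μ := by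
    simp only [mul_sub]
    rw [integral_sub hint (hint₁.mul_const _), integral_mul_const, h₀, zero_mul, sub_zero]
  obtain ⟨a, b, hab, hpos⟩ := hf.exists_Ioo_sq_sub_one_mul_sub_pos hrc hnc
  rw [hshift, integral_pos_iff_support_of_nonneg hf.sq_sub_one_mul_sub_nonneg hint']
  have hIoo : μ (Ioo a b) ≠ 0 := fun h ↦ hab.not_ge (by simpa using hμ h)
  exact (pos_iff_ne_zero.2 hIoo).trans_le (measure_mono fun t ht ↦ (hpos t ht).ne')

theorem AntitoneOn.integral_sq_sub_one_mul_neg {μ : Measure ℝ} (hμ : volume ≪ μ)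
    (hf : AntitoneOn f (Ici 0)) (hrc : ∀ x ≥ (0 : ℝ), ContinuousWithinAt f (Ici x) x)
    (hnc : ∃ x ∈ Ici (0 : ℝ), ∃ y ∈ Ici (0 : ℝ), f x ≠ f y)
    (hint₁ : Integrable (fun y ↦ y ^ 2 - 1) μ) (h₀ : ∫ y, (y ^ 2 - 1) ∂μ = 0)
    (hint : Integrable (fun y ↦ (y ^ 2 - 1) * f |y|) μ) :
    ∫ y, (y ^ 2 - 1) * f |y| ∂μ < 0 := by
  have hnc' : ∃ x ∈ Ici (0 : ℝ), ∃ y ∈ Ici (0 : ℝ), -f x ≠ -f y := by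
    obtain ⟨x, hx, y, hy, hxy⟩ := hnc
    exact ⟨x, hx, y, hy, neg_injective.ne hxy⟩
  have h := hf.neg.integral_sq_sub_one_mul_pos hμ (fun x hx ↦ (hrc x hx).neg) hnc' hint₁ h₀
    (by simp only [mul_neg]; exact hint.neg)
  simpa only [mul_neg, integral_neg, neg_pos] using h

end MonotoneOn

theorem hermite_rank_two_abs_general {Ω : Type*} [MeasurableSpace Ω]
    (P : Measure Ω)
    (Y : Ω → ℝ) (hYmeas : Measurable Y)
    (hY : Measure.map Y P = gaussianReal 0 1)
    (G : ℝ → ℝ)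
    (hGmono : MonotoneOn G (Set.Ici 0) ∨ AntitoneOn G (Set.Ici 0))
    (hGrc : ∀ x ≥ (0 : ℝ), ContinuousWithinAt G (Set.Ici x) x)
    (hGnc : ∃ x ∈ Set.Ici (0 : ℝ), ∃ y ∈ Set.Ici (0 : ℝ), G x ≠ G y)
    (θ : ℝ) (hθ : θ ∈ Set.Ioc (0 : ℝ) 1)
    (hmom : Integrable (fun ω => abs (G |Y ω|) ^ (1 + θ)) P) :
    Integrable (fun ω => Y ω * G |Y ω|) P ∧
    (∫ ω, Y ω * G |Y ω| ∂P) = 0 ∧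
    Integrable (fun ω => (Y ω ^ 2 - 1) * G |Y ω|) P ∧
    (∫ ω, (Y ω ^ 2 - 1) * G |Y ω| ∂P) ≠ 0 ∧
    (MonotoneOn G (Set.Ici 0) → 0 < ∫ ω, (Y ω ^ 2 - 1) * G |Y ω| ∂P) ∧
    (AntitoneOn G (Set.Ici 0) → (∫ ω, (Y ω ^ 2 - 1) * G |Y ω| ∂P) < 0) := by
  have hYlaw : HasLaw Y (gaussianReal 0 1) P := ⟨hYmeas.aemeasurable, hY⟩
  have hGm : Measurable fun y ↦ G |y| :=
    hGmono.elim MonotoneOn.measurable_comp_abs AntitoneOn.measurable_comp_abs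
  have hm₁ : AEStronglyMeasurable (fun y ↦ y * G |y|) (gaussianReal 0 1) :=
    (measurable_id.mul hGm).aestronglyMeasurable
  have hm₂ : AEStronglyMeasurable (fun y ↦ (y ^ 2 - 1) * G |y|) (gaussianReal 0 1) :=
    (((measurable_id.pow_const 2).sub_const 1).mul hGm).aestronglyMeasurable
  have hGLp : MemLp (fun y ↦ G |y|) (ENNReal.ofReal (1 + θ)) (gaussianReal 0 1) :=
    (hYlaw.memLp_ofReal_iff_integrable_abs_rpow hGm.aestronglyMeasurable
      (by linarith [hθ.1])).2 hmom
  have hq : 1 < ENNReal.ofReal (1 + θ) := ENNReal.one_lt_ofReal.2 (by linarith [hθ.1])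
  have hLp₂ : ∀ p ≠ ∞, MemLp (fun y ↦ y ^ 2 - 1) p (gaussianReal 0 1) := fun p hp ↦
    (memLp_pow_gaussianReal 0 1 2 hp).sub (memLp_const 1)
  have hI₁ : Integrable (fun y ↦ y * G |y|) (gaussianReal 0 1) :=
    hGLp.integrable_mul_of_forall_memLp hq memLp_id_gaussianReal'
  have hI₂ : Integrable (fun y ↦ (y ^ 2 - 1) * G |y|) (gaussianReal 0 1) :=
    hGLp.integrable_mul_of_forall_memLp hq hLp₂
  have hE₂ : ∫ ω, (Y ω ^ 2 - 1) * G |Y ω| ∂P =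
      ∫ y, (y ^ 2 - 1) * G |y| ∂gaussianReal 0 1 := hYlaw.integral_comp hm₂
  have hvol := gaussianReal_absolutelyContinuous' 0 one_ne_zero
  have hint₁ := (hLp₂ 1 ENNReal.one_ne_top).integrable le_rfl
  have h₀ := integral_sq_sub_one_gaussianReal
  have hpos : MonotoneOn G (Ici 0) → 0 < ∫ ω, (Y ω ^ 2 - 1) * G |Y ω| ∂P := fun hm ↦
    hE₂ ▸ hm.integral_sq_sub_one_mul_pos hvol hGrc hGnc hint₁ h₀ hI₂
  have hneg : AntitoneOn G (Ici 0) → ∫ ω, (Y ω ^ 2 - 1) * G |Y ω| ∂P < 0 := fun ha ↦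
    hE₂ ▸ ha.integral_sq_sub_one_mul_neg hvol hGrc hGnc hint₁ h₀ hI₂
  refine ⟨(hYlaw.integrable_comp_iff hm₁).2 hI₁,
    (hYlaw.integral_comp hm₁).trans (integral_eq_zero_of_odd _ fun y ↦ by simp),
    (hYlaw.integrable_comp_iff hm₂).2 hI₂,
    hGmono.elim (fun hm ↦ (hpos hm).ne') (fun ha ↦ (hneg ha).ne), hpos, hneg⟩

/-- for a monotone right-continuous non-constant `G` on `[0,∞)` with
`E|G(|Y|)|^{1+θ} < ∞`, one has `E[Y G(|Y|)] = 0` and `E[(Y²−1) G(|Y|)] ≠ 0`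
(positive if `G` is nondecreasing, negative if `G` is nonincreasing); i.e. `y ↦ G(|y|)`
has Hermite rank 2. -/
theorem hermite_rank_two_abs {Ω : Type*} [MeasurableSpace Ω]
    (P : Measure Ω) [IsProbabilityMeasure P]
    (Y : Ω → ℝ) (hYmeas : Measurable Y)
    (hY : Measure.map Y P = gaussianReal 0 1)
    (G : ℝ → ℝ)
    (hGmono : MonotoneOn G (Set.Ici 0) ∨ AntitoneOn G (Set.Ici 0))
    (hGrc : ∀ x ≥ (0 : ℝ), ContinuousWithinAt G (Set.Ici x) x)
    (hGnc : ∃ x ∈ Set.Ici (0 : ℝ), ∃ y ∈ Set.Ici (0 : ℝ), G x ≠ G y)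
    (θ : ℝ) (hθ : θ ∈ Set.Ioc (0 : ℝ) 1)
    (hmom : Integrable (fun ω => abs (G |Y ω|) ^ (1 + θ)) P) :
    Integrable (fun ω => Y ω * G |Y ω|) P ∧
    (∫ ω, Y ω * G |Y ω| ∂P) = 0 ∧
    Integrable (fun ω => (Y ω ^ 2 - 1) * G |Y ω|) P ∧
    (∫ ω, (Y ω ^ 2 - 1) * G |Y ω| ∂P) ≠ 0 ∧
    (MonotoneOn G (Set.Ici 0) → 0 < ∫ ω, (Y ω ^ 2 - 1) * G |Y ω| ∂P) ∧
    (AntitoneOn G (Set.Ici 0) → (∫ ω, (Y ω ^ 2 - 1) * G |Y ω| ∂P) < 0) :=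
  hermite_rank_two_abs_general P Y hYmeas hY G hGmono hGrc hGnc θ hθ hmom
end

section
/- Let Y be a standard normal random variable and let α > 0. Then the tail of exp(Y²/(2α)) satisfies the precise asymptotics lim_{x→∞} x^α √(π α log x) · P( exp(Y²/(2α)) > x ) = 1. In particular, P(exp(Y²/(2α)) > x) is regularly varying at +∞ with index −α, i.e., P(exp(Y²/(2α)) > x) = x^{−α} L(x) with L slowly varying, and for α ∈ (0,2] the random variable exp(Y²/(2α)) has infinite variance. -/
/-!
With `t = √(2α log x)` the event `exp(Y²/(2α)) > x` is `|Y| > t`, and `x^α = e^{t²/2}`,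
`√(πα log x) = √(π/2) t`, so the first claim is Mills' ratio
`P(|Y| > t) ~ √(2/π) e^{-t²/2} / t`. The latter follows by squeezing
`∫_t^∞ e^{-u²/2} du` between `e^{-t²/2} / (t (1 + t⁻²))` and `e^{-t²/2} / t`, both obtained by
comparing the integrand with the exact derivatives `(-e^{-u²/2})' = u e^{-u²/2}` and
`(-e^{-u²/2}/u)' = (1 + u⁻²) e^{-u²/2}`. Then `L(x) = x^α P(exp(Y²/(2α)) > x)` is asymptotic to
`1/√(πα log x)`, which is slowly varying because `log` is. Finally
`E exp(Y²/α) = (2π)^{-1/2} ∫ e^{(1/α - 1/2) y²} dy = ∞` when `α ≤ 2`.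
-/

open MeasureTheory ProbabilityTheory Set Filter

section GaussianTail

open Real Topology

lemma tendsto_exp_neg_sq_div_two_atTop : Tendsto (fun u : ℝ ↦ exp (-u ^ 2 / 2)) atTop (𝓝 0) := by
  have h : Tendsto (fun u : ℝ ↦ -u ^ 2 / 2) atTop atBot := by
    simpa only [Function.comp_def, neg_div] using tendsto_neg_atTop_atBot.comp
      ((tendsto_pow_atTop two_ne_zero).atTop_div_const (two_pos : (0 : ℝ) < 2))
  exact tendsto_exp_atBot.comp h

lemma hasDerivAt_neg_exp_neg_sq_div_two (u : ℝ) :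
    HasDerivAt (fun v : ℝ ↦ -exp (-v ^ 2 / 2)) (u * exp (-u ^ 2 / 2)) u := by
  have h : HasDerivAt (fun v : ℝ ↦ -v ^ 2 / 2) (-u) u :=
    ((hasDerivAt_pow 2 u).fun_neg.div_const 2).congr_deriv (by ring)
  exact h.exp.fun_neg.congr_deriv (by ring)

lemma hasDerivAt_neg_exp_neg_sq_div_two_div {u : ℝ} (hu : u ≠ 0) :
    HasDerivAt (fun v : ℝ ↦ -exp (-v ^ 2 / 2) / v)
      ((1 + (u ^ 2)⁻¹) * exp (-u ^ 2 / 2)) u :=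
  ((hasDerivAt_neg_exp_neg_sq_div_two u).fun_div (hasDerivAt_id' u) hu).congr_deriv
    (by field_simp; ring)

lemma integral_Ioi_mul_exp_neg_sq_div_two {t : ℝ} (ht : 0 ≤ t) :
    ∫ u in Ioi t, u * exp (-u ^ 2 / 2) = exp (-t ^ 2 / 2) := by
  rw [integral_Ioi_of_hasDerivAt_of_nonneg' (fun u _ ↦ hasDerivAt_neg_exp_neg_sq_div_two u)
    (fun u hu ↦ mul_nonneg (ht.trans hu.out.le) (exp_pos _).le)
    (by simpa using tendsto_exp_neg_sq_div_two_atTop.neg), zero_sub, neg_neg]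

lemma integrableOn_Ioi_exp_neg_sq_div_two (t : ℝ) :
    IntegrableOn (fun u : ℝ ↦ exp (-u ^ 2 / 2)) (Ioi t) := by
  simpa [neg_div, div_eq_inv_mul] using
    (integrable_exp_neg_mul_sq (b := 2⁻¹) (by norm_num)).integrableOn (s := Ioi t)

lemma integral_Ioi_exp_neg_sq_div_two_le {t : ℝ} (ht : 0 < t) :
    ∫ u in Ioi t, exp (-u ^ 2 / 2) ≤ exp (-t ^ 2 / 2) / t := by
  have hmul : IntegrableOn (fun u : ℝ ↦ u * exp (-u ^ 2 / 2)) (Ioi t) :=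
    integrableOn_Ioi_deriv_of_nonneg' (fun u _ ↦ hasDerivAt_neg_exp_neg_sq_div_two u)
      (fun u hu ↦ mul_nonneg (ht.le.trans hu.out.le) (exp_pos _).le)
      (by simpa using tendsto_exp_neg_sq_div_two_atTop.neg)
  calc ∫ u in Ioi t, exp (-u ^ 2 / 2) ≤ ∫ u in Ioi t, t⁻¹ * (u * exp (-u ^ 2 / 2)) := by
        refine setIntegral_mono_on (integrableOn_Ioi_exp_neg_sq_div_two t) (hmul.const_mul _)
          measurableSet_Ioi fun u hu ↦ ?_
        rw [← mul_assoc]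
        refine le_mul_of_one_le_left (exp_pos _).le ?_
        rw [inv_mul_eq_div, one_le_div ht]
        exact hu.out.le
    _ = exp (-t ^ 2 / 2) / t := by
        rw [integral_const_mul, integral_Ioi_mul_exp_neg_sq_div_two ht.le, inv_mul_eq_div]

lemma exp_neg_sq_div_two_div_le_integral_Ioi {t : ℝ} (ht : 0 < t) :
    exp (-t ^ 2 / 2) / t ≤ (1 + (t ^ 2)⁻¹) * ∫ u in Ioi t, exp (-u ^ 2 / 2) := by
  have hderiv : ∀ u ∈ Ici t, HasDerivAt (fun v : ℝ ↦ -exp (-v ^ 2 / 2) / v)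
      ((1 + (u ^ 2)⁻¹) * exp (-u ^ 2 / 2)) u :=
    fun u hu ↦ hasDerivAt_neg_exp_neg_sq_div_two_div (ht.trans_le hu).ne'
  have hnonneg : ∀ u ∈ Ioi t, 0 ≤ (1 + (u ^ 2)⁻¹) * exp (-u ^ 2 / 2) :=
    fun u _ ↦ by positivity
  have hlim : Tendsto (fun v : ℝ ↦ -exp (-v ^ 2 / 2) / v) atTop (𝓝 0) := by
    simpa using tendsto_exp_neg_sq_div_two_atTop.neg.div_atTop tendsto_id
  calc exp (-t ^ 2 / 2) / t = ∫ u in Ioi t, (1 + (u ^ 2)⁻¹) * exp (-u ^ 2 / 2) := by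
        rw [integral_Ioi_of_hasDerivAt_of_nonneg' hderiv hnonneg hlim]; ring
    _ ≤ ∫ u in Ioi t, (1 + (t ^ 2)⁻¹) * exp (-u ^ 2 / 2) := by
        refine setIntegral_mono_on (integrableOn_Ioi_deriv_of_nonneg' hderiv hnonneg hlim)
          ((integrableOn_Ioi_exp_neg_sq_div_two t).const_mul _) measurableSet_Ioi fun u hu ↦ ?_
        gcongr
        exact hu.out.le
    _ = (1 + (t ^ 2)⁻¹) * ∫ u in Ioi t, exp (-u ^ 2 / 2) := integral_const_mul _ _

lemma mul_exp_sq_div_two_mul_exp_neg_sq_div_two_div {t : ℝ} (ht : t ≠ 0) :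
    t * exp (t ^ 2 / 2) * (exp (-t ^ 2 / 2) / t) = 1 := by
  rw [neg_div, exp_neg]
  field_simp

theorem tendsto_mul_exp_mul_integral_Ioi_exp_neg_sq_div_two :
    Tendsto (fun t : ℝ ↦ t * exp (t ^ 2 / 2) * ∫ u in Ioi t, exp (-u ^ 2 / 2)) atTop (𝓝 1) := by
  have hlower : Tendsto (fun t : ℝ ↦ (1 + (t ^ 2)⁻¹)⁻¹) atTop (𝓝 1) := by
    simpa using ((tendsto_inv_atTop_zero.comp (tendsto_pow_atTop two_ne_zero)).const_add
      (1 : ℝ)).inv₀ (by norm_num)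
  refine tendsto_of_tendsto_of_tendsto_of_le_of_le' hlower tendsto_const_nhds ?_ ?_ <;>
    filter_upwards [eventually_gt_atTop 0] with t ht
  · rw [inv_le_iff_one_le_mul₀' (by positivity)]
    calc 1 = t * exp (t ^ 2 / 2) * (exp (-t ^ 2 / 2) / t) :=
          (mul_exp_sq_div_two_mul_exp_neg_sq_div_two_div ht.ne').symm
      _ ≤ t * exp (t ^ 2 / 2) * ((1 + (t ^ 2)⁻¹) * ∫ u in Ioi t, exp (-u ^ 2 / 2)) := by
          gcongr; exact exp_neg_sq_div_two_div_le_integral_Ioi ht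
      _ = _ := by ring
  · rw [← mul_exp_sq_div_two_mul_exp_neg_sq_div_two_div ht.ne']
    gcongr
    exact integral_Ioi_exp_neg_sq_div_two_le ht

lemma gaussianPDFReal_zero_one (y : ℝ) :
    gaussianPDFReal 0 1 y = (√(2 * π))⁻¹ * exp (-y ^ 2 / 2) := by
  simp [gaussianPDFReal_def]

lemma gaussianReal_zero_one_Iio_neg (t : ℝ) :
    gaussianReal 0 1 (Iio (-t)) = gaussianReal 0 1 (Ioi t) := by
  have hsymm : (gaussianReal 0 1).map (fun y ↦ -y) = gaussianReal 0 1 := by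
    rw [gaussianReal_map_neg, neg_zero]
  calc gaussianReal 0 1 (Iio (-t)) = (gaussianReal 0 1).map (fun y ↦ -y) (Iio (-t)) := by
        rw [hsymm]
    _ = gaussianReal 0 1 (Ioi t) := by
        rw [Measure.map_apply measurable_neg measurableSet_Iio]
        congr 1
        ext y
        simp

lemma gaussianReal_zero_one_lt_abs {t : ℝ} (ht : 0 ≤ t) :
    gaussianReal 0 1 {y | t < |y|} = 2 * gaussianReal 0 1 (Ioi t) := by
  have hsplit : {y : ℝ | t < |y|} = Iio (-t) ∪ Ioi t := by
    ext y
    simp only [mem_ofPred_eq, mem_union, mem_Iio, mem_Ioi, lt_abs, lt_neg, or_comm]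
  have hdisj : Disjoint (Iio (-t)) (Ioi t) :=
    Iio_disjoint_Ioi_of_le (by linarith)
  rw [hsplit, measure_union hdisj measurableSet_Ioi, gaussianReal_zero_one_Iio_neg, two_mul]

lemma toReal_gaussianReal_zero_one_Ioi (t : ℝ) :
    (gaussianReal 0 1 (Ioi t)).toReal = (√(2 * π))⁻¹ * ∫ u in Ioi t, exp (-u ^ 2 / 2) := by
  rw [gaussianReal_apply_eq_integral 0 one_ne_zero,
    ENNReal.toReal_ofReal (setIntegral_nonneg measurableSet_Ioi
      fun y _ ↦ gaussianPDFReal_nonneg 0 1 y),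
    ← integral_const_mul]
  exact setIntegral_congr_fun measurableSet_Ioi fun y _ ↦ gaussianPDFReal_zero_one y

theorem tendsto_mul_gaussianReal_zero_one_lt_abs :
    Tendsto (fun t : ℝ ↦ √(π / 2) * t * exp (t ^ 2 / 2) *
      (gaussianReal 0 1 {y | t < |y|}).toReal) atTop (𝓝 1) := by
  have hconst : √(π / 2) * 2 * (√(2 * π))⁻¹ = 1 := by
    rw [show 2 * π = π / 2 * 2 ^ 2 by ring, sqrt_mul (by positivity), sqrt_sq zero_le_two]
    field_simp
  refine tendsto_mul_exp_mul_integral_Ioi_exp_neg_sq_div_two.congr' ?_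
  filter_upwards [eventually_ge_atTop 0] with t ht
  rw [gaussianReal_zero_one_lt_abs ht, ENNReal.toReal_mul, toReal_gaussianReal_zero_one_Ioi]
  calc t * exp (t ^ 2 / 2) * ∫ u in Ioi t, exp (-u ^ 2 / 2)
      = (√(π / 2) * 2 * (√(2 * π))⁻¹) *
          (t * exp (t ^ 2 / 2) * ∫ u in Ioi t, exp (-u ^ 2 / 2)) := by rw [hconst, one_mul]
    _ = _ := by simp only [ENNReal.toReal_ofNat]; ring

lemma exp_sq_div_two_mul_sq_eq_exp_inv_mul_sq {α : ℝ} (hα : α ≠ 0) (y : ℝ) :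
    exp (y ^ 2 / (2 * α)) ^ 2 = exp (α⁻¹ * y ^ 2) := by
  rw [← exp_nat_mul]
  congr 1
  field_simp
  ring

lemma not_integrable_exp_mul_sq_gaussianReal {c : ℝ} (hc : 2⁻¹ ≤ c) :
    ¬ Integrable (fun y ↦ exp (c * y ^ 2)) (gaussianReal 0 1) := by
  rw [gaussianReal_of_var_ne_zero 0 one_ne_zero, integrable_withDensity_iff
    (measurable_gaussianPDF 0 1) (ae_of_all _ fun _ ↦ gaussianPDF_lt_top)]
  intro h
  have hpos : (0 : ℝ) < (√(2 * π))⁻¹ := by positivity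
  have hconst : Integrable (fun _ : ℝ ↦ (√(2 * π))⁻¹) := by
    refine h.mono' aestronglyMeasurable_const (ae_of_all _ fun y ↦ ?_)
    have hexp : 1 ≤ exp (c * y ^ 2) * exp (-y ^ 2 / 2) := by
      rw [← exp_add]
      exact one_le_exp (by nlinarith [sq_nonneg y])
    rw [toReal_gaussianPDF, gaussianPDFReal_zero_one, norm_of_nonneg hpos.le]
    nlinarith
  have := (integrable_const_iff_isFiniteMeasure hpos.ne').1 hconst
  simpa using measure_lt_top (volume : Measure ℝ) univ

lemma lt_exp_sq_div_iff {α x : ℝ} (hα : 0 < α) (hx : 1 ≤ x) (y : ℝ) :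
    x < exp (y ^ 2 / (2 * α)) ↔ √(2 * α * log x) < |y| := by
  rw [← log_lt_iff_lt_exp (by linarith), lt_div_iff₀' (by positivity), ← sqrt_sq_eq_abs,
    sqrt_lt_sqrt_iff (by have := log_nonneg hx; positivity)]

section StandardNormalVariable

variable {Ω : Type*} [MeasurableSpace Ω] {P : Measure Ω} {Y : Ω → ℝ}

lemma measure_lt_exp_sq_div_eq (hYmeas : Measurable Y) (hY : P.map Y = gaussianReal 0 1)
    {α x : ℝ} (hα : 0 < α) (hx : 1 ≤ x) :
    P {ω | x < exp (Y ω ^ 2 / (2 * α))} = gaussianReal 0 1 {y | √(2 * α * log x) < |y|} := by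
  rw [← hY, Measure.map_apply hYmeas (measurableSet_lt measurable_const continuous_abs.measurable)]
  simp only [preimage_ofPred_eq, lt_exp_sq_div_iff hα hx]

theorem tendsto_rpow_mul_sqrt_mul_measure_lt_exp_sq_div (hYmeas : Measurable Y)
    (hY : P.map Y = gaussianReal 0 1) {α : ℝ} (hα : 0 < α) :
    Tendsto (fun x : ℝ ↦ x ^ α * √(π * α * log x) *
      (P {ω | x < exp (Y ω ^ 2 / (2 * α))}).toReal) atTop (𝓝 1) := by
  have ht : Tendsto (fun x : ℝ ↦ √(2 * α * log x)) atTop atTop :=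
    tendsto_sqrt_atTop.comp (tendsto_log_atTop.const_mul_atTop (by positivity))
  refine (tendsto_mul_gaussianReal_zero_one_lt_abs.comp ht).congr' ?_
  filter_upwards [eventually_gt_atTop 1] with x hx
  have hlog : 0 ≤ 2 * α * log x := by have := log_nonneg hx.le; positivity
  have hpow : x ^ α = exp (√(2 * α * log x) ^ 2 / 2) := by
    rw [sq_sqrt hlog, rpow_def_of_pos (by linarith)]
    ring_nf
  have hsqrt : √(π * α * log x) = √(π / 2) * √(2 * α * log x) := by
    rw [← sqrt_mul (by positivity)]
    ring_nf
  rw [Function.comp_apply, measure_lt_exp_sq_div_eq hYmeas hY hα hx.le, hpow, hsqrt]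
  ring

end StandardNormalVariable

end GaussianTail

section SlowlyVarying

open Real Topology

def SlowlyVarying (L : ℝ → ℝ) : Prop :=
  ∀ l > (0 : ℝ), Tendsto (fun x ↦ L (l * x) / L x) atTop (𝓝 1)

lemma slowlyVarying_log : SlowlyVarying log := by
  intro l hl
  have h : Tendsto (fun x ↦ 1 + log l / log x) atTop (𝓝 1) := by
    simpa using (tendsto_const_nhds.div_atTop tendsto_log_atTop).const_add (1 : ℝ)
  refine h.congr' ?_
  filter_upwards [eventually_gt_atTop 1] with x hx
  rw [log_mul hl.ne' (by linarith), add_div, div_self (log_pos hx).ne', add_comm]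

lemma SlowlyVarying.const_mul {f : ℝ → ℝ} (hf : SlowlyVarying f) {c : ℝ} (hc : c ≠ 0) :
    SlowlyVarying (fun x ↦ c * f x) := fun l hl ↦ by
  simpa only [mul_div_mul_left _ _ hc] using hf l hl

lemma SlowlyVarying.sqrt {f : ℝ → ℝ} (hf : SlowlyVarying f) (hpos : ∀ᶠ x in atTop, 0 ≤ f x) :
    SlowlyVarying (fun x ↦ √(f x)) := fun l hl ↦ by
  refine (by simpa [Function.comp_def] using (continuous_sqrt.tendsto 1).comp (hf l hl) :
    Tendsto (fun x ↦ √(f (l * x) / f x)) atTop (𝓝 1)).congr' ?_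
  filter_upwards [hpos] with x hx
  exact sqrt_div' _ hx

lemma SlowlyVarying.of_tendsto_mul {L h : ℝ → ℝ} {c : ℝ} (hh : SlowlyVarying h)
    (hLh : Tendsto (fun x ↦ L x * h x) atTop (𝓝 c)) (hc : c ≠ 0) : SlowlyVarying L := by
  intro l hl
  have hratio := ((hLh.comp (tendsto_id.const_mul_atTop hl)).div hLh hc).div (hh l hl) one_ne_zero
  rw [div_self hc, div_one] at hratio
  refine hratio.congr' ?_
  filter_upwards [(hh l hl).eventually_ne one_ne_zero] with x hx
  simp only [Pi.div_apply, Function.comp_apply, id_eq]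
  rw [mul_div_mul_comm, mul_div_cancel_right₀ _ hx]

end SlowlyVarying

theorem tail_asymptotics_exp_gaussian_sq_general {Ω : Type*} [MeasurableSpace Ω]
    (P : Measure Ω)
    (Y : Ω → ℝ) (hYmeas : Measurable Y)
    (hY : Measure.map Y P = gaussianReal 0 1)
    (α : ℝ) (hα : 0 < α) :
    Tendsto (fun x : ℝ => x ^ α * Real.sqrt (Real.pi * α * Real.log x) *
        (P {ω | x < Real.exp (Y ω ^ 2 / (2 * α))}).toReal) atTop (nhds 1) ∧
    (∃ L : ℝ → ℝ, (∀ l > (0 : ℝ), Tendsto (fun x => L (l * x) / L x) atTop (nhds 1)) ∧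
      ∀ᶠ x in atTop, (P {ω | x < Real.exp (Y ω ^ 2 / (2 * α))}).toReal = x ^ (-α) * L x) ∧
    (α ≤ 2 → ¬ Integrable (fun ω => Real.exp (Y ω ^ 2 / (2 * α)) ^ 2) P) := by
  have htail := tendsto_rpow_mul_sqrt_mul_measure_lt_exp_sq_div hYmeas hY hα
  refine ⟨htail, ⟨fun x ↦ x ^ α * (P {ω | x < Real.exp (Y ω ^ 2 / (2 * α))}).toReal, ?_, ?_⟩, ?_⟩
  · have hsqrt : SlowlyVarying fun x ↦ Real.sqrt (Real.pi * α * Real.log x) :=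
      (slowlyVarying_log.const_mul (by positivity)).sqrt
        (by filter_upwards [eventually_ge_atTop 1] with x hx
            have := Real.log_nonneg hx
            positivity)
    exact hsqrt.of_tendsto_mul (htail.congr fun x ↦ mul_right_comm _ _ _) one_ne_zero
  · filter_upwards [eventually_gt_atTop 0] with x hx
    rw [Real.rpow_neg hx.le, inv_mul_cancel_left₀ (Real.rpow_pos_of_pos hx α).ne']
  · intro hα2 hint
    refine not_integrable_exp_mul_sq_gaussianReal (inv_anti₀ hα hα2) ?_
    rw [← hY, integrable_map_measure (by fun_prop) hYmeas.aemeasurable]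
    simpa [Function.comp_def, exp_sq_div_two_mul_sq_eq_exp_inv_mul_sq hα.ne'] using hint

/-- precise tail asymptotics of `exp(Y²/(2α))` for a standard normal `Y`:
`x^α √(πα log x) P(exp(Y²/(2α)) > x) → 1`; in particular the tail is regularly varying of
index `−α`, and for `α ≤ 2` the random variable `exp(Y²/(2α))` has infinite variance. -/
theorem tail_asymptotics_exp_gaussian_sq {Ω : Type*} [MeasurableSpace Ω]
    (P : Measure Ω) [IsProbabilityMeasure P]
    (Y : Ω → ℝ) (hYmeas : Measurable Y)
    (hY : Measure.map Y P = gaussianReal 0 1)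
    (α : ℝ) (hα : 0 < α) :
    Tendsto (fun x : ℝ => x ^ α * Real.sqrt (Real.pi * α * Real.log x) *
        (P {ω | x < Real.exp (Y ω ^ 2 / (2 * α))}).toReal) atTop (nhds 1) ∧
    (∃ L : ℝ → ℝ, (∀ l > (0 : ℝ), Tendsto (fun x => L (l * x) / L x) atTop (nhds 1)) ∧
      ∀ᶠ x in atTop, (P {ω | x < Real.exp (Y ω ^ 2 / (2 * α))}).toReal = x ^ (-α) * L x) ∧
    (α ≤ 2 → ¬ Integrable (fun ω => Real.exp (Y ω ^ 2 / (2 * α)) ^ 2) P) :=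
  tail_asymptotics_exp_gaussian_sq_general P Y hYmeas hY α hα
end

section
/- (Hoeffding's covariance identity.) Let X and Y be real random variables on a common probability space with E[X²] < ∞ and E[Y²] < ∞. Then the function (u,v) ↦ P(X > u, Y > v) − P(X > u) P(Y > v) is Lebesgue integrable on ℝ² and Cov(X, Y) = ∫_ℝ ∫_ℝ ( P(X > u, Y > v) − P(X > u) P(Y > v) ) du dv. -/
/-!
For real `a, b` one has `a - b = ∫ (1{u < a} - 1{u < b}) du`. Applying this to an independent
copy `(X', Y')` of `(X, Y)`, realised on `(Ω × Ω, P ⊗ P)`, gives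
`(X - X') (Y - Y') = ∫∫ (1{u < X} - 1{u < X'}) (1{v < Y} - 1{v < Y'}) du dv`.
Under `P ⊗ P` the left side has expectation `2 Cov(X, Y)`, while for fixed `(u, v)` the integrand
has expectation `2 Cov(1{X > u}, 1{Y > v})`. Fubini applies because the integral of the absolute
value in `(u, v)` is `|X - X'| |Y - Y'|`, which is integrable as `X, Y ∈ L²`.
-/

open MeasureTheory ProbabilityTheory Set

noncomputable section

lemma indicator_Iio_sub_indicator_Iio_of_le {a b : ℝ} (h : b ≤ a) (u : ℝ) :
    (Iio a).indicator (1 : ℝ → ℝ) u - (Iio b).indicator 1 u = (Ico b a).indicator 1 u := by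
  by_cases hua : u < a <;> by_cases hub : u < b
  all_goals simp [indicator_apply, hua, hub]
  linarith

lemma integrable_indicator_Iio_sub_indicator_Iio (a b : ℝ) :
    Integrable (fun u => (Iio a).indicator (1 : ℝ → ℝ) u - (Iio b).indicator 1 u) := by
  wlog h : b ≤ a generalizing a b
  · exact (this b a (le_of_not_ge h)).neg.congr (.of_forall fun u => by simp)
  simp_rw [indicator_Iio_sub_indicator_Iio_of_le h]
  exact (integrable_indicator_iff measurableSet_Ico).2 (integrableOn_const measure_Ico_lt_top.ne)

lemma integral_indicator_Iio_sub_indicator_Iio (a b : ℝ) :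
    ∫ u, ((Iio a).indicator (1 : ℝ → ℝ) u - (Iio b).indicator 1 u) = a - b := by
  wlog h : b ≤ a generalizing a b
  · rw [← neg_sub b a, ← this b a (le_of_not_ge h), ← integral_neg]
    simp
  simp_rw [indicator_Iio_sub_indicator_Iio_of_le h]
  rw [integral_indicator_one measurableSet_Ico, Real.volume_real_Ico_of_le h]

lemma integral_abs_indicator_Iio_sub_indicator_Iio (a b : ℝ) :
    ∫ u, |(Iio a).indicator (1 : ℝ → ℝ) u - (Iio b).indicator 1 u| = |a - b| := by
  wlog h : b ≤ a generalizing a b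
  · simp_rw [abs_sub_comm _ ((Iio b).indicator _ _), abs_sub_comm a b]
    exact this b a (le_of_not_ge h)
  have habs (u : ℝ) : |(Ico b a).indicator (1 : ℝ → ℝ) u| = (Ico b a).indicator 1 u :=
    abs_of_nonneg (indicator_nonneg (fun _ _ => zero_le_one) u)
  simp_rw [indicator_Iio_sub_indicator_Iio_of_le h, habs]
  rw [integral_indicator_one measurableSet_Ico, Real.volume_real_Ico_of_le h,
    abs_of_nonneg (sub_nonneg.2 h)]

@[fun_prop]
lemma Measurable.indicator_Iio_one {α : Type*} [MeasurableSpace α] {f g : α → ℝ}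
    (hf : Measurable f) (hg : Measurable g) :
    Measurable fun x => (Iio (g x)).indicator (1 : ℝ → ℝ) (f x) :=
  measurable_one.indicator (measurableSet_lt hf hg)

section Covariance

variable {Ω : Type*} [MeasurableSpace Ω] {μ : Measure Ω} [IsProbabilityMeasure μ]

lemma integrable_sub_mul_sub_prod_self {f g : Ω → ℝ} (hf : MemLp f 2 μ) (hg : MemLp g 2 μ) :
    Integrable (fun q : Ω × Ω => (f q.1 - f q.2) * (g q.1 - g q.2)) (μ.prod μ) :=
  ((hf.comp_fst μ).sub (hf.comp_snd μ)).integrable_mul ((hg.comp_fst μ).sub (hg.comp_snd μ))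

lemma integral_sub_mul_sub_prod_self {f g : Ω → ℝ} (hf : MemLp f 2 μ) (hg : MemLp g 2 μ) :
    ∫ q : Ω × Ω, (f q.1 - f q.2) * (g q.1 - g q.2) ∂(μ.prod μ) = 2 * cov[f, g; μ] := by
  have hfg := hf.integrable_mul hg
  have hf1 := hf.integrable one_le_two
  have hg1 := hg.integrable one_le_two
  have h11 : Integrable (fun q : Ω × Ω => f q.1 * g q.1) (μ.prod μ) := hfg.comp_fst μ
  have h22 : Integrable (fun q : Ω × Ω => f q.2 * g q.2) (μ.prod μ) := hfg.comp_snd μ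
  have h12 : Integrable (fun q : Ω × Ω => f q.1 * g q.2) (μ.prod μ) := hf1.mul_prod hg1
  have h21 : Integrable (fun q : Ω × Ω => g q.1 * f q.2) (μ.prod μ) := hg1.mul_prod hf1
  have hdiag : Integrable (fun q : Ω × Ω => f q.1 * g q.1 + f q.2 * g q.2) (μ.prod μ) :=
    h11.add h22
  have hcross : Integrable (fun q : Ω × Ω => f q.1 * g q.2 + g q.1 * f q.2) (μ.prod μ) :=
    h12.add h21
  have hexpand : (fun q : Ω × Ω => (f q.1 - f q.2) * (g q.1 - g q.2)) =
      fun q => f q.1 * g q.1 + f q.2 * g q.2 - (f q.1 * g q.2 + g q.1 * f q.2) := by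
    ext q; ring
  rw [hexpand, integral_sub hdiag hcross, integral_add h11 h22, integral_add h12 h21,
    integral_fun_fst (fun ω => f ω * g ω), integral_fun_snd (fun ω => f ω * g ω),
    integral_prod_mul f g, integral_prod_mul g f, covariance_eq_sub hf hg]
  simp only [probReal_univ, one_smul, Pi.mul_apply]
  ring

lemma covariance_indicator_one {s t : Set Ω} (hs : MeasurableSet s) (ht : MeasurableSet t) :
    cov[s.indicator (1 : Ω → ℝ), t.indicator 1; μ] =
      μ.real (s ∩ t) - μ.real s * μ.real t := by
  have hs2 : MemLp (s.indicator (1 : Ω → ℝ)) 2 μ :=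
    memLp_indicator_const 2 hs (1 : ℝ) (.inr (measure_ne_top μ s))
  have ht2 : MemLp (t.indicator (1 : Ω → ℝ)) 2 μ :=
    memLp_indicator_const 2 ht (1 : ℝ) (.inr (measure_ne_top μ t))
  rw [covariance_eq_sub hs2 ht2, ← inter_indicator_one, integral_indicator_one (hs.inter ht),
    integral_indicator_one hs, integral_indicator_one ht]

end Covariance

section HoeffdingKernel

variable {Ω : Type*} (X Y : Ω → ℝ)

def hoeffdingKernel (p : ℝ × ℝ) (q : Ω × Ω) : ℝ :=
  ((Iio (X q.1)).indicator 1 p.1 - (Iio (X q.2)).indicator 1 p.1) *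
    ((Iio (Y q.1)).indicator 1 p.2 - (Iio (Y q.2)).indicator 1 p.2)

lemma integral_hoeffdingKernel_volume (q : Ω × Ω) :
    ∫ p, hoeffdingKernel X Y p q = (X q.1 - X q.2) * (Y q.1 - Y q.2) := by
  unfold hoeffdingKernel
  rw [Measure.volume_eq_prod, integral_prod_mul
    (fun u => (Iio (X q.1)).indicator (1 : ℝ → ℝ) u - (Iio (X q.2)).indicator 1 u)
    (fun v => (Iio (Y q.1)).indicator (1 : ℝ → ℝ) v - (Iio (Y q.2)).indicator 1 v),
    integral_indicator_Iio_sub_indicator_Iio, integral_indicator_Iio_sub_indicator_Iio]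

lemma integral_norm_hoeffdingKernel_volume (q : Ω × Ω) :
    ∫ p, ‖hoeffdingKernel X Y p q‖ = ‖(X q.1 - X q.2) * (Y q.1 - Y q.2)‖ := by
  simp only [hoeffdingKernel, norm_mul, Real.norm_eq_abs]
  rw [Measure.volume_eq_prod, integral_prod_mul
    (fun u => |(Iio (X q.1)).indicator (1 : ℝ → ℝ) u - (Iio (X q.2)).indicator 1 u|)
    (fun v => |(Iio (Y q.1)).indicator (1 : ℝ → ℝ) v - (Iio (Y q.2)).indicator 1 v|),
    integral_abs_indicator_Iio_sub_indicator_Iio, integral_abs_indicator_Iio_sub_indicator_Iio]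

variable [MeasurableSpace Ω] {X Y}

lemma measurable_uncurry_hoeffdingKernel (hX : Measurable X) (hY : Measurable Y) :
    Measurable (Function.uncurry (hoeffdingKernel X Y)) := by
  unfold hoeffdingKernel Function.uncurry
  fun_prop

lemma integrable_hoeffdingKernel (P : Measure Ω) [IsProbabilityMeasure P]
    (hX : Measurable X) (hY : Measurable Y) (hX2 : MemLp X 2 P) (hY2 : MemLp Y 2 P) :
    Integrable (Function.uncurry (hoeffdingKernel X Y)) (volume.prod (P.prod P)) := by
  refine (integrable_prod_iff' (measurable_uncurry_hoeffdingKernel hX hY).aestronglyMeasurable).2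
    ⟨.of_forall fun q => ?_, ?_⟩
  · rw [Measure.volume_eq_prod]
    simp only [Function.uncurry_apply_pair, hoeffdingKernel]
    exact (integrable_indicator_Iio_sub_indicator_Iio _ _).mul_prod
      (integrable_indicator_Iio_sub_indicator_Iio _ _)
  · simp_rw [Function.uncurry_apply_pair, integral_norm_hoeffdingKernel_volume]
    exact (integrable_sub_mul_sub_prod_self hX2 hY2).norm

lemma integral_hoeffdingKernel_prod (P : Measure Ω) [IsProbabilityMeasure P]
    (hX : Measurable X) (hY : Measurable Y) (p : ℝ × ℝ) :
    ∫ q, hoeffdingKernel X Y p q ∂(P.prod P) =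
      2 * (P.real {ω | p.1 < X ω ∧ p.2 < Y ω}
        - P.real {ω | p.1 < X ω} * P.real {ω | p.2 < Y ω}) := by
  have hsX : MeasurableSet {ω | p.1 < X ω} := measurableSet_lt measurable_const hX
  have hsY : MeasurableSet {ω | p.2 < Y ω} := measurableSet_lt measurable_const hY
  rw [ofPred_and, ← covariance_indicator_one hsX hsY, ← integral_sub_mul_sub_prod_self]
  · rfl
  · exact memLp_indicator_const 2 hsX (1 : ℝ) (.inr (measure_ne_top P _))
  · exact memLp_indicator_const 2 hsY (1 : ℝ) (.inr (measure_ne_top P _))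

end HoeffdingKernel

/-- Hoeffding's covariance identity: for square-integrable `X, Y`,
`(u,v) ↦ P(X>u, Y>v) − P(X>u)P(Y>v)` is Lebesgue integrable on `ℝ²` and
`Cov(X,Y) = ∫∫ (P(X>u, Y>v) − P(X>u)P(Y>v)) du dv`. -/
theorem hoeffding_covariance_identity {Ω : Type*} [MeasurableSpace Ω]
    (P : Measure Ω) [IsProbabilityMeasure P]
    (X Y : Ω → ℝ) (hX : Measurable X) (hY : Measurable Y)
    (hX2 : Integrable (fun ω => X ω ^ 2) P)
    (hY2 : Integrable (fun ω => Y ω ^ 2) P) :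
    Integrable (fun p : ℝ × ℝ =>
      (P {ω | p.1 < X ω ∧ p.2 < Y ω}).toReal
        - (P {ω | p.1 < X ω}).toReal * (P {ω | p.2 < Y ω}).toReal)
      (volume : Measure (ℝ × ℝ)) ∧
    (∫ ω, X ω * Y ω ∂P) - (∫ ω, X ω ∂P) * (∫ ω, Y ω ∂P) =
      ∫ p : ℝ × ℝ,
        ((P {ω | p.1 < X ω ∧ p.2 < Y ω}).toReal
          - (P {ω | p.1 < X ω}).toReal * (P {ω | p.2 < Y ω}).toReal) := by
  have hXL2 : MemLp X 2 P := (memLp_two_iff_integrable_sq hX.aestronglyMeasurable).2 hX2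
  have hYL2 : MemLp Y 2 P := (memLp_two_iff_integrable_sq hY.aestronglyMeasurable).2 hY2
  have hK := integrable_hoeffdingKernel P hX hY hXL2 hYL2
  have hslice := hK.integral_prod_left
  simp only [Function.uncurry_apply_pair, integral_hoeffdingKernel_prod P hX hY] at hslice
  refine ⟨(integrable_const_mul_iff (isUnit_iff_ne_zero.2 two_ne_zero) _).1 hslice, ?_⟩
  calc (∫ ω, X ω * Y ω ∂P) - (∫ ω, X ω ∂P) * (∫ ω, Y ω ∂P)
      = (∫ q, (X q.1 - X q.2) * (Y q.1 - Y q.2) ∂(P.prod P)) / 2 := by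
        rw [integral_sub_mul_sub_prod_self hXL2 hYL2, covariance_eq_sub hXL2 hYL2]
        simp
    _ = (∫ q, (∫ p, hoeffdingKernel X Y p q) ∂(P.prod P)) / 2 := by
        simp_rw [integral_hoeffdingKernel_volume]
    _ = (∫ p, ∫ q, hoeffdingKernel X Y p q ∂(P.prod P)) / 2 := by
        rw [integral_integral_swap hK]
    _ = _ := by
        simp_rw [integral_hoeffdingKernel_prod P hX hY, integral_const_mul]
        simp [measureReal_def]

end
end
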